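/- arXiv:2305.11166 — 5 statements merged into one kernel-verified Lean document; each statement's English description precedes it below -/
import Mathlib

section
/- Fix ξ ∈ ℝ³ ∖ {0} and let K₁(ξ, θ) := −1/(θ − i|ξ|)² for θ ∈ ℝ. Then 1 + K₁(ξ, θ) ≠ 0 for all real θ; one has the partial fraction identity K₁(ξ,θ)/(1 + K₁(ξ,θ)) = −(1/2) [ 1/(θ − (1 + i|ξ|)) − 1/(θ − (−1 + i|ξ|)) ]; and for every τ ≥ 0: (1/(2π)) ∫_ℝ [K₁(ξ, θ)/(1 + K₁(ξ, θ))] e^{i θ τ} dθ = e^{−|ξ| τ} sin(τ). Equivalently, the Green's function of the linearized Vlasov–Poisson system around the Poisson equilibrium satisfies Ĝ₁(ξ, τ) = δ₀(τ) − 1_{[0,∞)}(τ) e^{−|ξ|τ} sin(τ), in the sense that its regular part equals −e^{−|ξ|τ} sin(τ) for τ ≥ 0. -/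
open MeasureTheory

open Set Complex FourierTransform


private lemma integrableOn_cexp_Ioi {c : ℂ} (hc : c.re < 0) :
    IntegrableOn (fun t : ℝ => Complex.exp (c * t)) (Ioi 0) := by
  refine (exp_neg_integrableOn_Ioi 0 (show (0:ℝ) < -c.re by linarith)).mono' ?_ ?_
  · exact (Complex.continuous_exp.comp
      (continuous_const.mul Complex.continuous_ofReal)).aestronglyMeasurable
  · filter_upwards with t
    rw [Complex.norm_exp]
    simp [neg_mul, mul_comm]

private lemma integral_cexp_Ioi {c : ℂ} (hc : c.re < 0) :
    ∫ t in Ioi (0:ℝ), Complex.exp (c * t) = -c⁻¹ := by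
  have hc0 : c ≠ 0 := by
    intro h; rw [h] at hc; simp at hc
  have hderiv : ∀ x ∈ Ioi (0:ℝ),
      HasDerivAt (fun t : ℝ => c⁻¹ * Complex.exp (c * t)) (Complex.exp (c * x)) x := by
    intro x _
    have h : HasDerivAt (fun z : ℂ => Complex.exp (c * z)) (c * Complex.exp (c * x)) (x:ℂ) := by
      exact ((Complex.hasDerivAt_exp (c * x)).comp (x:ℂ)
        ((hasDerivAt_id (x:ℂ)).const_mul c)).congr_deriv (by simp [mul_comm])
    have h2 := h.comp_ofReal
    have := h2.const_mul c⁻¹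
    convert this using 1
    case e'_4 => rfl
    case e'_9 => rw [inv_mul_cancel_left₀ hc0]
  have htend : Filter.Tendsto (fun t : ℝ => c⁻¹ * Complex.exp (c * t)) Filter.atTop (nhds 0) := by
    rw [show (0:ℂ) = c⁻¹ * 0 by ring]
    apply Filter.Tendsto.const_mul
    rw [tendsto_zero_iff_norm_tendsto_zero]
    have : ∀ t : ℝ, ‖Complex.exp (c * t)‖ = Real.exp (-((-c.re) * t)) := by
      intro t; rw [Complex.norm_exp]; simp [mul_comm]
    simp_rw [this]
    exact (Real.tendsto_exp_neg_atTop_nhds_zero).comp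
      (Filter.Tendsto.const_mul_atTop (by linarith) Filter.tendsto_id)
  have := integral_Ioi_of_hasDerivAt_of_tendsto
    ((Continuous.continuousWithinAt (by fun_prop)) :
      ContinuousWithinAt (fun t : ℝ => c⁻¹ * Complex.exp (c * t)) (Ici 0) 0)
    hderiv (integrableOn_cexp_Ioi hc) htend
  rw [this]; simp

/-- The time profile `e^{-bt} sin t` on `t > 0`. -/
private noncomputable def Fb (b : ℝ) : ℝ → ℂ :=
  fun t => ((Real.exp (-(b * t)) * Real.sin t : ℝ) : ℂ)

private noncomputable def fb (b : ℝ) : ℝ → ℂ :=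
  fun t => if t ≤ 0 then 0 else Fb b t

private noncomputable def gb (b : ℝ) : ℝ → ℂ :=
  fun θ => -((((θ:ℂ) - (1 + b * Complex.I)) * ((θ:ℂ) - (-1 + b * Complex.I)))⁻¹)

private lemma sub_root_ne_zero {b : ℝ} (hb : 0 < b) (θ r : ℝ) :
    ((θ:ℂ) - ((r:ℂ) + b * Complex.I)) ≠ 0 := by
  intro h
  have := congrArg Complex.im h
  simp at this
  linarith

private lemma fb_eq_indicator (b : ℝ) : fb b = (Ioi (0:ℝ)).indicator (Fb b) := by
  funext t
  by_cases h : t ≤ 0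
  · simp [fb, h, indicator_of_notMem (by simpa using h : t ∉ Ioi (0:ℝ))]
  · simp [fb, h, indicator_of_mem (by simpa using lt_of_not_ge h : t ∈ Ioi (0:ℝ))]

private lemma continuous_fb (b : ℝ) : Continuous (fb b) := by
  have hF : Continuous (Fb b) := by unfold Fb; fun_prop
  exact Continuous.if_le continuous_const hF continuous_id continuous_const
    (by intro x hx; simp [Fb, hx])

private lemma integrable_fb {b : ℝ} (hb : 0 < b) : Integrable (fb b) := by
  rw [fb_eq_indicator]
  refine (IntegrableOn.integrable_indicator ?_ measurableSet_Ioi)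
  refine (exp_neg_integrableOn_Ioi 0 hb).mono' ?_ ?_
  · exact (by unfold Fb; fun_prop : Continuous (Fb b)).aestronglyMeasurable
  · filter_upwards with t
    have h1 : |Real.sin t| ≤ 1 := abs_le.2 ⟨Real.neg_one_le_sin t, Real.sin_le_one t⟩
    have : ‖Fb b t‖ = Real.exp (-(b*t)) * |Real.sin t| := by
      rw [Fb, Complex.norm_real, Real.norm_eq_abs, abs_mul, Real.abs_exp]
    rw [this]
    calc Real.exp (-(b*t)) * |Real.sin t| ≤ Real.exp (-(b*t)) * 1 := by
          exact mul_le_mul_of_nonneg_left h1 (Real.exp_nonneg _)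
      _ = Real.exp (-b * t) := by rw [mul_one]; ring_nf

private lemma key_integral {b : ℝ} (hb : 0 < b) (θ : ℝ) :
    ∫ v in Ioi (0:ℝ), Complex.exp ((↑(-(θ * v)) : ℂ) * Complex.I) * Fb b v = gb b θ := by
  set p : ℂ := 1 + b * Complex.I with hp
  set q : ℂ := -1 + b * Complex.I with hq
  set c₁ : ℂ := -Complex.I * ((θ:ℂ) - p) with hc₁
  set c₂ : ℂ := -Complex.I * ((θ:ℂ) - q) with hc₂
  have hre₁ : c₁.re = -b := by simp [hc₁, hp]
  have hre₂ : c₂.re = -b := by simp [hc₂, hq]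
  have h1 : ∀ v : ℝ, Complex.exp ((↑(-(θ * v)) : ℂ) * Complex.I) * Fb b v =
      (Complex.exp (c₁ * v) - Complex.exp (c₂ * v)) * (2 * Complex.I)⁻¹ := by
    intro v
    have hsin : (Real.sin v : ℂ) =
        (Complex.exp (-(v:ℂ) * Complex.I) - Complex.exp ((v:ℂ) * Complex.I)) * Complex.I / 2 := by
      rw [Complex.ofReal_sin]
      have := Complex.two_sin (x := (v:ℂ))
      field_simp at this ⊢
      linear_combination this
    have he₁ : c₁ * v = (↑(-(θ * v)) : ℂ) * Complex.I + ↑(-(b*v)) + (v:ℂ) * Complex.I := by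
      simp only [hc₁, hp]; push_cast
      linear_combination ((b:ℂ)*(v:ℂ)) * Complex.I_sq
    have he₂ : c₂ * v = (↑(-(θ * v)) : ℂ) * Complex.I + ↑(-(b*v)) + (-(v:ℂ)) * Complex.I := by
      simp only [hc₂, hq]; push_cast
      linear_combination ((b:ℂ)*(v:ℂ)) * Complex.I_sq
    rw [Fb, Complex.ofReal_mul, Complex.ofReal_exp, hsin, he₁, he₂,
      Complex.exp_add, Complex.exp_add, Complex.exp_add, Complex.exp_add]
    have hI : Complex.I ≠ 0 := Complex.I_ne_zero
    field_simp
    linear_combination (Complex.exp (-(Complex.I * v)) - Complex.exp (Complex.I * v)) * Complex.I_sq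
  simp_rw [h1]
  rw [integral_mul_const, integral_sub (integrableOn_cexp_Ioi (by rw [hre₁]; linarith))
    (integrableOn_cexp_Ioi (by rw [hre₂]; linarith)),
    integral_cexp_Ioi (by rw [hre₁]; linarith), integral_cexp_Ioi (by rw [hre₂]; linarith)]
  have hp0 : ((θ:ℂ) - p) ≠ 0 := sub_root_ne_zero hb θ 1
  have hq0 : ((θ:ℂ) - q) ≠ 0 := by
    have := sub_root_ne_zero hb θ (-1)
    simpa [hq] using this
  rw [gb]
  have hI : Complex.I ≠ 0 := Complex.I_ne_zero
  simp only [hc₁, hc₂, hp, hq] at hp0 hq0 ⊢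
  have hBA : (θ:ℂ) - (-1 + b * Complex.I) = ((θ:ℂ) - (1 + b * Complex.I)) + 2 := by ring
  rw [hBA] at hq0 ⊢
  generalize (θ:ℂ) - (1 + b * Complex.I) = A at hp0 hq0 ⊢
  field_simp
  linear_combination 2 * Complex.I_sq

private lemma fourier_fb {b : ℝ} (hb : 0 < b) (w : ℝ) :
    𝓕 (fb b) w = gb b (2 * Real.pi * w) := by
  rw [Real.fourier_real_eq_integral_exp_smul]
  have h : ∀ v : ℝ, Complex.exp ((↑(-2 * Real.pi * v * w) : ℂ) * Complex.I) • fb b v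
      = (Ioi (0:ℝ)).indicator
          (fun v => Complex.exp ((↑(-(2 * Real.pi * w * v)) : ℂ) * Complex.I) * Fb b v) v := by
    intro v
    rw [fb_eq_indicator]
    by_cases hv : v ∈ Ioi (0:ℝ)
    · rw [indicator_of_mem hv, indicator_of_mem hv, smul_eq_mul]
      congr 3
      push_cast; ring
    · rw [indicator_of_notMem hv, indicator_of_notMem hv, smul_zero]
  simp_rw [h]
  rw [integral_indicator measurableSet_Ioi]
  exact key_integral hb (2 * Real.pi * w)

private lemma gb_bound {b : ℝ} (hb : 0 < b) (θ : ℝ) :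
    ‖gb b θ‖ ≤ (2 / (min 1 b)^2) * (1 + θ^2)⁻¹ := by
  set m := min 1 b with hm
  have hm0 : 0 < m := lt_min one_pos hb
  have hm1 : m ≤ 1 := min_le_left _ _
  have hmb : m ≤ b := min_le_right _ _
  set z₁ : ℂ := (θ:ℂ) - (1 + b * Complex.I) with hz₁
  set z₂ : ℂ := (θ:ℂ) - (-1 + b * Complex.I) with hz₂
  have hnorm : ‖gb b θ‖ = ‖z₁ * z₂‖⁻¹ := by
    rw [gb, norm_neg, norm_inv]
  have hsq : ‖z₁ * z₂‖ = Real.sqrt (((θ-1)^2 + b^2) * ((θ+1)^2 + b^2)) := by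
    rw [Complex.norm_def, Complex.normSq_mul]
    congr 1
    have h₁ : Complex.normSq z₁ = (θ-1)^2 + b^2 := by
      rw [Complex.normSq_apply]; simp [hz₁]; ring
    have h₂ : Complex.normSq z₂ = (θ+1)^2 + b^2 := by
      rw [Complex.normSq_apply]; simp [hz₂]; ring
    rw [h₁, h₂]
  have hkey : m^2/2 * (1 + θ^2) ≤ ‖z₁ * z₂‖ := by
    rw [hsq]
    rw [show (m^2/2 * (1 + θ^2)) = Real.sqrt ((m^2/2 * (1 + θ^2))^2) by
      rw [Real.sqrt_sq (by positivity)]]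
    apply Real.sqrt_le_sqrt
    have hm2 : m^2 ≤ 1 := by nlinarith
    have hmb2 : m^2 ≤ b^2 := by nlinarith
    have h1 : m^2 * ((θ-1)^2 + 1) ≤ (θ-1)^2 + b^2 := by nlinarith [sq_nonneg (θ-1)]
    have h2 : m^2 * ((θ+1)^2 + 1) ≤ (θ+1)^2 + b^2 := by nlinarith [sq_nonneg (θ+1)]
    have hprod := mul_le_mul h1 h2 (by positivity) (by positivity)
    nlinarith [hprod, sq_nonneg (θ^2 - 1), sq_nonneg (m^2 * (θ^2-1)), sq_nonneg m]
  rw [hnorm]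
  have hpos : (0:ℝ) < m^2/2 * (1 + θ^2) := by positivity
  calc ‖z₁ * z₂‖⁻¹ ≤ (m^2/2 * (1 + θ^2))⁻¹ := by
        exact inv_anti₀ hpos hkey
    _ = (2 / m^2) * (1 + θ^2)⁻¹ := by
        rw [mul_inv]; field_simp
  
private lemma continuous_gb {b : ℝ} (hb : 0 < b) : Continuous (gb b) := by
  apply Continuous.neg
  apply Continuous.inv₀
  · fun_prop
  · intro θ
    exact mul_ne_zero (sub_root_ne_zero hb θ 1)
      (by simpa using sub_root_ne_zero hb θ (-1))

private lemma integrable_gb {b : ℝ} (hb : 0 < b) : Integrable (gb b) := by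
  refine Integrable.mono' ((integrable_inv_one_add_sq).const_mul (2 / (min 1 b)^2))
    (continuous_gb hb).aestronglyMeasurable ?_
  filter_upwards with θ
  simpa using gb_bound hb θ

/-- Explicit Green's function computation for the Poisson equilibrium:
with `K₁(ξ,θ) = -1/(θ - i|ξ|)²`, one has `1 + K₁ ≠ 0` on the real axis, the partial
fraction identity for `K₁/(1+K₁)`, and the regular part of the Green's function equals
`-e^{-|ξ|τ} sin τ`, i.e. `(1/2π) ∫ [K₁/(1+K₁)] e^{iθτ} dθ = e^{-|ξ|τ} sin τ` for `τ ≥ 0`. -/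
theorem green_function_poisson_equilibrium (ξ : EuclideanSpace ℝ (Fin 3)) (hξ : ξ ≠ 0) :
    let K1 : ℝ → ℂ := fun θ => -(((θ : ℂ) - Complex.I * (‖ξ‖ : ℂ)) ^ 2)⁻¹
    (∀ θ : ℝ, 1 + K1 θ ≠ 0) ∧
    (∀ θ : ℝ, K1 θ / (1 + K1 θ) =
      -(1 / 2 : ℂ) * (((θ : ℂ) - (1 + Complex.I * (‖ξ‖ : ℂ)))⁻¹ -
        ((θ : ℂ) - (-1 + Complex.I * (‖ξ‖ : ℂ)))⁻¹)) ∧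
    (∀ τ : ℝ, 0 ≤ τ →
      ((2 * Real.pi : ℝ) : ℂ)⁻¹ *
          (∫ θ : ℝ, (K1 θ / (1 + K1 θ)) * Complex.exp (Complex.I * (θ : ℂ) * (τ : ℂ))) =
        ((Real.exp (-(‖ξ‖ * τ)) * Real.sin τ : ℝ) : ℂ)) := by
  intro K1
  set b : ℝ := ‖ξ‖ with hbdef
  have hb : 0 < b := norm_pos_iff.mpr hξ
  have hX : ∀ θ : ℝ, ((θ:ℂ) - Complex.I * b) ≠ 0 := by
    intro θ h
    have := congrArg Complex.im h
    simp at this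
    linarith
  have hp0 : ∀ θ : ℝ, ((θ:ℂ) - (1 + Complex.I * b)) ≠ 0 := by
    intro θ h
    have := congrArg Complex.im h
    simp at this
    linarith
  have hq0 : ∀ θ : ℝ, ((θ:ℂ) - (-1 + Complex.I * b)) ≠ 0 := by
    intro θ h
    have := congrArg Complex.im h
    simp at this
    linarith
  have h1 : ∀ θ : ℝ, 1 + K1 θ ≠ 0 := by
    intro θ h
    have hX2 : (((θ:ℂ) - Complex.I * b) ^ 2) ≠ 0 := pow_ne_zero _ (hX θ)
    have h' : (((θ:ℂ) - Complex.I * b) ^ 2) = 1 := by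
      have : K1 θ = -1 := by linear_combination h
      show _ = (1:ℂ)
      have h3 : (((θ:ℂ) - Complex.I * b) ^ 2)⁻¹ = 1 := by
        have h4 : -(((θ:ℂ) - Complex.I * b) ^ 2)⁻¹ = -1 := this
        exact neg_inj.mp h4
      exact inv_eq_one.mp h3
    have hfac : (((θ:ℂ) - Complex.I * b) - 1) * (((θ:ℂ) - Complex.I * b) + 1) = 0 := by
      linear_combination h'
    rcases mul_eq_zero.1 hfac with h2 | h2
    · have := congrArg Complex.im h2
      simp at this
      linarith
    · have := congrArg Complex.im h2
      simp at this
      linarith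
  have hKg : ∀ θ : ℝ, K1 θ / (1 + K1 θ) = gb b θ := by
    intro θ
    rw [div_eq_iff (h1 θ)]
    have hX2 : (((θ:ℂ) - Complex.I * b) ^ 2) ≠ 0 := pow_ne_zero _ (hX θ)
    have hz1 : ((θ:ℂ) - ((1:ℝ) + (b:ℂ) * Complex.I)) ≠ 0 := sub_root_ne_zero hb θ 1
    have hz2 : ((θ:ℂ) - ((-1:ℝ) + (b:ℂ) * Complex.I)) ≠ 0 := sub_root_ne_zero hb θ (-1)
    show -(((θ:ℂ) - Complex.I * b) ^ 2)⁻¹ = gb b θ * (1 + -(((θ:ℂ) - Complex.I * b) ^ 2)⁻¹)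
    rw [gb]
    push_cast at hz1 hz2 ⊢
    have hz12 : ((θ:ℂ) - (1 + b * Complex.I)) * ((θ:ℂ) - (-1 + b * Complex.I)) =
        ((θ:ℂ) - Complex.I * b) ^ 2 - 1 := by ring
    have hY : ((θ:ℂ) - Complex.I * b) ^ 2 - 1 ≠ 0 := by rw [← hz12]; exact mul_ne_zero hz1 hz2
    rw [hz12]
    generalize ((θ:ℂ) - Complex.I * b) ^ 2 = Y at hY hX2 ⊢
    field_simp
    ring
  refine ⟨h1, ?_, ?_⟩
  · intro θ
    have hz1 := hp0 θ
    have hz2 := hq0 θ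
    rw [hKg θ, gb,
      show (1 + (b:ℂ) * Complex.I) = (1 + Complex.I * (b:ℂ)) from by ring,
      show (-1 + (b:ℂ) * Complex.I) = (-1 + Complex.I * (b:ℂ)) from by ring]
    field_simp
    ring
  · intro τ hτ
    simp_rw [hKg]
    set H : ℝ → ℂ := fun θ => gb b θ * Complex.exp (Complex.I * (θ:ℂ) * (τ:ℂ)) with hH
    have hfour : 𝓕 (fb b) = fun w => gb b (2 * Real.pi * w) :=
      funext (fourier_fb hb)
    have hFint : Integrable (𝓕 (fb b)) := by
      rw [hfour]
      exact (integrable_gb hb).comp_mul_left' (by positivity : (2 * Real.pi) ≠ 0)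
    have hinv : 𝓕⁻ (𝓕 (fb b)) τ = fb b τ :=
      (integrable_fb hb).fourierInv_fourier_eq hFint (continuous_fb b).continuousAt
    have hinv2 : 𝓕⁻ (𝓕 (fb b)) τ
        = ∫ v : ℝ, H (2 * Real.pi * v) := by
      rw [Real.fourierInv_eq_fourier_neg,
        Real.fourier_real_eq_integral_exp_smul, hfour]
      refine integral_congr_ae (Filter.Eventually.of_forall fun v => ?_)
      simp only [hH, smul_eq_mul]
      rw [mul_comm]
      congr 2
      push_cast
      ring
    have hcv : ∫ v : ℝ, H (2 * Real.pi * v) = ((2 * Real.pi)⁻¹ : ℝ) • ∫ θ : ℝ, H θ := by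
      rw [Measure.integral_comp_mul_left H (2 * Real.pi)]
      congr 1
      rw [abs_of_pos (by positivity)]
    have hfb : fb b τ = ((Real.exp (-(b * τ)) * Real.sin τ : ℝ) : ℂ) := by
      by_cases h : τ ≤ 0
      · have hτ0 : τ = 0 := le_antisymm h hτ
        simp [fb, hτ0]
      · rw [fb]
        simp only [if_neg h]
        rfl
    calc ((2 * Real.pi : ℝ) : ℂ)⁻¹ * ∫ θ : ℝ, H θ
        = ((2 * Real.pi)⁻¹ : ℝ) • ∫ θ : ℝ, H θ := by
          rw [Complex.real_smul, Complex.ofReal_inv]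
      _ = fb b τ := by rw [← hcv, ← hinv2, hinv]
      _ = _ := hfb
end

section
/- For r > 0, let ρ(r) > 0 and κ(r) > 0 be the unique positive reals with κ² = 1 + 3ρ² and r = ρ + 4ρ³, and set α(r) := −4ρ³/(1 + 12ρ²) and β(r) := −(1/(2κ)) (1 + 24ρ⁴/(1 + 12ρ²)). Then there exist r* > 0 and C > 0 such that for all 0 < r < r*: |ρ(r) − r| ≤ C r³, |κ(r) − 1 − 3r²/2| ≤ C r⁴, |α(r) + 4r³| ≤ C r⁵, and |β(r) + 1/2 − 3r²/4| ≤ C r⁴. -/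
set_option maxHeartbeats 2000000 in
/-- Small-frequency asymptotics of the root parameters `ρ, κ` of the cubic
`ζ³ + ζ + 2r` and of the partial fraction coefficients `α, β` for the first
generalized Poisson equilibrium: `ρ = r + O(r³)`, `κ = 1 + 3r²/2 + O(r⁴)`,
`α = -4r³ + O(r⁵)`, `β = -1/2 + 3r²/4 + O(r⁴)`. -/
theorem expansions_first_generalized_poisson (ρ κ α β : ℝ → ℝ)
    (hroots : ∀ r : ℝ, 0 < r →
      0 < ρ r ∧ 0 < κ r ∧ (κ r) ^ 2 = 1 + 3 * (ρ r) ^ 2 ∧ r = ρ r + 4 * (ρ r) ^ 3)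
    (hα : ∀ r : ℝ, 0 < r → α r = -4 * (ρ r) ^ 3 / (1 + 12 * (ρ r) ^ 2))
    (hβ : ∀ r : ℝ, 0 < r →
      β r = -(1 / (2 * κ r)) * (1 + 24 * (ρ r) ^ 4 / (1 + 12 * (ρ r) ^ 2))) :
    ∃ rs : ℝ, 0 < rs ∧ ∃ C : ℝ, 0 < C ∧ ∀ r : ℝ, 0 < r → r < rs →
      |ρ r - r| ≤ C * r ^ 3 ∧
      |κ r - 1 - 3 * r ^ 2 / 2| ≤ C * r ^ 4 ∧
      |α r + 4 * r ^ 3| ≤ C * r ^ 5 ∧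
      |β r + 1 / 2 - 3 * r ^ 2 / 4| ≤ C * r ^ 4 := by
  refine ⟨1/2, by norm_num, 1000, by norm_num, fun r hr hrs => ?_⟩
  obtain ⟨hp, hk, hk2, hr4⟩ := hroots r hr
  set p := ρ r with hpdef
  set k := κ r with hkdef
  have hpr : p ≤ r := by nlinarith [pow_pos hp 3]
  have hp2 : p < 1/2 := lt_of_le_of_lt hpr hrs
  have hrp : r - p = 4 * p ^ 3 := by linarith
  have hrp3 : r - p ≤ 4 * r ^ 3 := by nlinarith [pow_pos hp 3, pow_le_pow_left₀ hp.le hpr 3]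
  have k1 : 1 ≤ k := by nlinarith [sq_nonneg p]
  have kup : k ≤ 1 + 3 * p ^ 2 / 2 := by nlinarith [sq_nonneg p, sq_nonneg (p^2)]
  have klow : 1 + 3 * p ^ 2 / 2 - 9 * p ^ 4 / 8 ≤ k := by
    nlinarith [sq_nonneg p, sq_nonneg (p^2), pow_le_pow_left₀ hp.le hp2.le 2,
      pow_le_pow_left₀ hp.le hp2.le 4, pow_le_pow_left₀ hp.le hp2.le 6]
  have hD : (0:ℝ) < 1 + 12 * p ^ 2 := by positivity
  have hkD : (2:ℝ) ≤ 2 * k * (1 + 12 * p ^ 2) := by nlinarith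
  refine ⟨?_, ?_, ?_, ?_⟩
  · rw [abs_le]
    constructor <;> nlinarith [pow_pos hp 3, pow_le_pow_left₀ hp.le hpr 3]
  · rw [abs_le]
    constructor
    · nlinarith [pow_le_pow_left₀ hp.le hpr 2, pow_le_pow_left₀ hp.le hpr 4, pow_pos hr 4]
    · nlinarith [pow_le_pow_left₀ hp.le hpr 2, pow_le_pow_left₀ hp.le hpr 4, pow_pos hr 4,
        sq_nonneg (r - p), sq_nonneg (r + p)]
  · have key : α r + 4 * r ^ 3 = (-4 * p ^ 3 + 4 * r ^ 3 * (1 + 12 * p ^ 2)) / (1 + 12 * p ^ 2) := by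
      rw [hα r hr, ← hpdef]; field_simp
    rw [key, abs_div, abs_of_pos hD]
    rw [div_le_iff₀ hD]
    have hsum : r ^ 2 + r * p + p ^ 2 ≤ 3 * r ^ 2 := by nlinarith
    have h3 : r ^ 3 - p ^ 3 ≤ 12 * r ^ 5 := by
      nlinarith [mul_le_mul hrp3 hsum (by positivity) (by positivity)]
    have hps : p ^ 2 ≤ r ^ 2 := by nlinarith
    have h48 : 48 * r ^ 3 * p ^ 2 ≤ 48 * r ^ 5 := by
      nlinarith [mul_le_mul_of_nonneg_left hps (by positivity : (0:ℝ) ≤ 48 * r ^ 3)]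
    have hnum : |-4 * p ^ 3 + 4 * r ^ 3 * (1 + 12 * p ^ 2)| ≤ 100 * r ^ 5 := by
      rw [abs_le]
      constructor
      · nlinarith [pow_le_pow_left₀ hp.le hpr 3, pow_pos hr 5,
          mul_nonneg (pow_pos hr 3).le (sq_nonneg p)]
      · nlinarith [h3, h48, pow_pos hr 5]
    calc |-4 * p ^ 3 + 4 * r ^ 3 * (1 + 12 * p ^ 2)| ≤ 100 * r ^ 5 := hnum
      _ ≤ 1000 * r ^ 5 * (1 + 12 * p ^ 2) := by
          nlinarith [mul_nonneg (pow_pos hr 5).le (sq_nonneg p), pow_pos hr 5]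
  · have hk0 : (2 * k * (1 + 12 * p ^ 2)) ≠ 0 := by positivity
    have key : β r + 1 / 2 - 3 * r ^ 2 / 4 =
        ((1 + 12 * p ^ 2) * (k - 1) - 24 * p ^ 4 - (3 * r ^ 2 / 2) * k * (1 + 12 * p ^ 2))
          / (2 * k * (1 + 12 * p ^ 2)) := by
      rw [hβ r hr, ← hpdef, ← hkdef]; field_simp; ring
    rw [key, abs_div, abs_of_pos (by positivity : (0:ℝ) < 2 * k * (1 + 12 * p ^ 2))]
    rw [div_le_iff₀ (by positivity : (0:ℝ) < 2 * k * (1 + 12 * p ^ 2))]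
    have hps4 : p ^ 2 ≤ 1 / 4 := by nlinarith
    have hpsr : p ^ 2 ≤ r ^ 2 := by nlinarith
    have hp4r : p ^ 4 ≤ r ^ 4 := by nlinarith [sq_nonneg (p^2), sq_nonneg (r^2), sq_nonneg (p^2 + r^2)]
    have hkDle : k * (1 + 12 * p ^ 2) ≤ 1 + 18 * p ^ 2 := by
      nlinarith [mul_le_mul_of_nonneg_right kup hD.le, sq_nonneg p, sq_nonneg (p^2)]
    have hDk1 : 3 * p ^ 2 / 2 ≤ (1 + 12 * p ^ 2) * (k - 1) := by
      nlinarith [mul_le_mul_of_nonneg_left (by linarith : (1:ℝ) + 3 * p ^ 2 / 2 - 9 * p ^ 4 / 8 ≤ k) hD.le,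
        sq_nonneg (p^2), mul_nonneg (sq_nonneg p) (sq_nonneg (p^2))]
    have h1 : -(12 * r ^ 4) ≤ 3 * p ^ 2 / 2 - 3 * r ^ 2 / 2 := by
      nlinarith [mul_le_mul hrp3 (by linarith : r + p ≤ 2 * r) (by linarith) (by positivity)]
    have h2 : r ^ 2 * p ^ 2 ≤ r ^ 4 := by nlinarith [mul_le_mul_of_nonneg_left hpsr (sq_nonneg r)]
    have h3 : (3 * r ^ 2 / 2) * (k * (1 + 12 * p ^ 2)) ≤ (3 * r ^ 2 / 2) * (1 + 18 * p ^ 2) := by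
      nlinarith [mul_le_mul_of_nonneg_left hkDle (by positivity : (0:ℝ) ≤ 3 * r ^ 2 / 2)]
    have hnum : |(1 + 12 * p ^ 2) * (k - 1) - 24 * p ^ 4 - (3 * r ^ 2 / 2) * k * (1 + 12 * p ^ 2)| ≤ 500 * r ^ 4 := by
      rw [abs_le]
      constructor
      · nlinarith [hDk1, h1, h2, h3, hp4r, pow_pos hr 4]
      · have hDkup : (1 + 12 * p ^ 2) * (k - 1) ≤ 3 * p ^ 2 / 2 + 18 * p ^ 4 := by
          nlinarith [mul_le_mul_of_nonneg_left (by linarith : k - 1 ≤ 3 * p ^ 2 / 2) hD.le]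
        have hkDge : (1:ℝ) ≤ k * (1 + 12 * p ^ 2) := by nlinarith
        have h4 : (3 * r ^ 2 / 2) * 1 ≤ (3 * r ^ 2 / 2) * (k * (1 + 12 * p ^ 2)) := by
          nlinarith [mul_le_mul_of_nonneg_left hkDge (by positivity : (0:ℝ) ≤ 3 * r ^ 2 / 2)]
        nlinarith [hDkup, h4, hp4r, hpsr, pow_pos hr 4]
    calc |(1 + 12 * p ^ 2) * (k - 1) - 24 * p ^ 4 - (3 * r ^ 2 / 2) * k * (1 + 12 * p ^ 2)|
        ≤ 500 * r ^ 4 := hnum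
      _ ≤ 1000 * r ^ 4 * (2 * k * (1 + 12 * p ^ 2)) := by
          nlinarith [mul_le_mul_of_nonneg_left hkD (by positivity : (0:ℝ) ≤ 1000 * r ^ 4),
            pow_pos hr 4]
end

section
/- For every r > 0, the quartic polynomial Q(ζ) = ζ⁴ + ζ² + 2rζ + 2r² = ζ⁴ + (ζ + r)² + r² has no real roots; its four roots can be written as ρ + iκ₁, ρ − iκ₁, −ρ + iκ₃, −ρ − iκ₃ with ρ > 0, κ₁ > 0, κ₃ > 0; and these satisfy 2κ₁² = 1 + 2ρ² + r/ρ, 2κ₃² = 1 + 2ρ² − r/ρ, and 16ρ⁶ + 8ρ⁴ + ρ²(1 − 8r²) = r². -/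
/-- The quartic `ζ⁴ + ζ² + 2rζ + 2r²` (denominator in the partial fraction
decomposition of `K₃/(1+K₃)` for the second generalized Poisson equilibrium)
has, for every `r > 0`, no real roots; its roots are `ρ ± iκ₁` and `-ρ ± iκ₃`
with `ρ, κ₁, κ₃ > 0` satisfying `2κ₁² = 1 + 2ρ² + r/ρ`, `2κ₃² = 1 + 2ρ² - r/ρ`,
and `16ρ⁶ + 8ρ⁴ + ρ²(1 - 8r²) = r²`. -/
theorem quartic_roots_second_generalized_poisson (r : ℝ) (hr : 0 < r) :
    ∃ ρ κ₁ κ₃ : ℝ, 0 < ρ ∧ 0 < κ₁ ∧ 0 < κ₃ ∧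
      2 * κ₁ ^ 2 = 1 + 2 * ρ ^ 2 + r / ρ ∧
      2 * κ₃ ^ 2 = 1 + 2 * ρ ^ 2 - r / ρ ∧
      16 * ρ ^ 6 + 8 * ρ ^ 4 + ρ ^ 2 * (1 - 8 * r ^ 2) = r ^ 2 ∧
      (∀ ζ : ℂ, ζ ^ 4 + ζ ^ 2 + 2 * (r : ℂ) * ζ + 2 * (r : ℂ) ^ 2 = 0 ↔
        ζ = (ρ : ℂ) + (κ₁ : ℂ) * Complex.I ∨ ζ = (ρ : ℂ) - (κ₁ : ℂ) * Complex.I ∨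
          ζ = -(ρ : ℂ) + (κ₃ : ℂ) * Complex.I ∨ ζ = -(ρ : ℂ) - (κ₃ : ℂ) * Complex.I) ∧
      (∀ x : ℝ, x ^ 4 + x ^ 2 + 2 * r * x + 2 * r ^ 2 ≠ 0) := by
  -- Find u > 0 with 16u³+8u²+u(1-8r²) = r² by IVT
  set f : ℝ → ℝ := fun u => 16 * u ^ 3 + 8 * u ^ 2 + u * (1 - 8 * r ^ 2) with hf
  have hcont : ContinuousOn f (Set.Icc 0 (r + 1)) := by fun_prop
  have hle : (0 : ℝ) ≤ r + 1 := by linarith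
  have hmem : r ^ 2 ∈ Set.Icc (f 0) (f (r + 1)) := by
    constructor
    · simp [hf]; positivity
    · simp only [hf]; nlinarith [sq_nonneg r, hr.le]
  obtain ⟨u, hu, hfu⟩ := intermediate_value_Icc hle hcont hmem
  have hupos : 0 < u := by
    rcases hu with ⟨hu0, _⟩
    rcases lt_or_eq_of_le hu0 with h | h
    · exact h
    · exfalso; rw [← h] at hfu; simp [hf] at hfu; nlinarith
  set ρ := Real.sqrt u with hρ
  have hρpos : 0 < ρ := Real.sqrt_pos.mpr hupos
  have hρ2 : ρ ^ 2 = u := Real.sq_sqrt hupos.le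
  have hc : 16 * ρ ^ 6 + 8 * ρ ^ 4 + ρ ^ 2 * (1 - 8 * r ^ 2) = r ^ 2 := by
    have : ρ ^ 6 = u ^ 3 := by rw [← hρ2]; ring
    have h4 : ρ ^ 4 = u ^ 2 := by rw [← hρ2]; ring
    rw [this, h4, hρ2]; simpa [hf] using hfu
  -- r < ρ(2ρ²+1)
  have hkey : r ^ 2 * (1 + 8 * ρ ^ 2) = ρ ^ 2 * (4 * ρ ^ 2 + 1) ^ 2 := by nlinarith [hc]
  have hrlt : r < ρ * (2 * ρ ^ 2 + 1) := by
    have hX : 0 < ρ * (2 * ρ ^ 2 + 1) := by positivity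
    have h1 : r ^ 2 < (ρ * (2 * ρ ^ 2 + 1)) ^ 2 := by
      nlinarith [hkey, pow_pos hρpos 2, pow_pos hρpos 4, pow_pos hρpos 6, pow_pos hρpos 8]
    nlinarith [h1, hX, hr]
  have hdiv : r / ρ < 1 + 2 * ρ ^ 2 := by
    rw [div_lt_iff₀ hρpos]; nlinarith [hrlt]
  have hdivpos : 0 < r / ρ := div_pos hr hρpos
  set κ₁ := Real.sqrt ((1 + 2 * ρ ^ 2 + r / ρ) / 2) with hκ₁
  set κ₃ := Real.sqrt ((1 + 2 * ρ ^ 2 - r / ρ) / 2) with hκ₃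
  have hκ₁pos : 0 < κ₁ := Real.sqrt_pos.mpr (by positivity)
  have hκ₃pos : 0 < κ₃ := Real.sqrt_pos.mpr (by linarith)
  have hk1 : 2 * κ₁ ^ 2 = 1 + 2 * ρ ^ 2 + r / ρ := by
    rw [hκ₁, Real.sq_sqrt (by positivity)]; ring
  have hk3 : 2 * κ₃ ^ 2 = 1 + 2 * ρ ^ 2 - r / ρ := by
    rw [hκ₃, Real.sq_sqrt (by linarith)]; ring
  have hρne : ρ ≠ 0 := ne_of_gt hρpos
  have hk1' : 2 * κ₁ ^ 2 * ρ = ρ + 2 * ρ ^ 3 + r := by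
    have hd : r / ρ * ρ = r := div_mul_cancel₀ r hρne
    linear_combination ρ * hk1 + hd
  have hk3' : 2 * κ₃ ^ 2 * ρ = ρ + 2 * ρ ^ 3 - r := by
    have hd : r / ρ * ρ = r := div_mul_cancel₀ r hρne
    linear_combination ρ * hk3 - hd
  have hA : (ρ ^ 2 + κ₁ ^ 2) + (ρ ^ 2 + κ₃ ^ 2) - 4 * ρ ^ 2 = 1 := by linarith
  have hB : 2 * ρ * ((ρ ^ 2 + κ₁ ^ 2) - (ρ ^ 2 + κ₃ ^ 2)) = 2 * r := by
    linear_combination hk1' - hk3'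
  have hAB : (ρ ^ 2 + κ₁ ^ 2) * (ρ ^ 2 + κ₃ ^ 2) = 2 * r ^ 2 := by
    have h4 : 4 * ρ ^ 2 * ((ρ ^ 2 + κ₁ ^ 2) * (ρ ^ 2 + κ₃ ^ 2)) = 4 * ρ ^ 2 * (2 * r ^ 2) := by
      linear_combination (2 * κ₃ ^ 2 * ρ + 2 * ρ ^ 3) * hk1' +
        (ρ + 4 * ρ ^ 3 + r) * hk3' + hc
    exact mul_left_cancel₀ (by positivity : (4 * ρ ^ 2 : ℝ) ≠ 0) h4
  have hAc : ((ρ:ℂ) ^ 2 + (κ₁:ℂ) ^ 2) + ((ρ:ℂ) ^ 2 + (κ₃:ℂ) ^ 2) - 4 * (ρ:ℂ) ^ 2 = 1 := by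
    exact_mod_cast hA
  have hBc : 2 * (ρ:ℂ) * (((ρ:ℂ) ^ 2 + (κ₁:ℂ) ^ 2) - ((ρ:ℂ) ^ 2 + (κ₃:ℂ) ^ 2)) = 2 * (r:ℂ) := by
    exact_mod_cast hB
  have hABc : ((ρ:ℂ) ^ 2 + (κ₁:ℂ) ^ 2) * ((ρ:ℂ) ^ 2 + (κ₃:ℂ) ^ 2) = 2 * (r:ℂ) ^ 2 := by
    exact_mod_cast hAB
  have hiff : ∀ ζ : ℂ, ζ ^ 4 + ζ ^ 2 + 2 * (r : ℂ) * ζ + 2 * (r : ℂ) ^ 2 = 0 ↔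
      ζ = (ρ : ℂ) + (κ₁ : ℂ) * Complex.I ∨ ζ = (ρ : ℂ) - (κ₁ : ℂ) * Complex.I ∨
        ζ = -(ρ : ℂ) + (κ₃ : ℂ) * Complex.I ∨ ζ = -(ρ : ℂ) - (κ₃ : ℂ) * Complex.I := by
    intro ζ
    have h1 : (ζ - ((ρ:ℂ) + (κ₁:ℂ) * Complex.I)) * (ζ - ((ρ:ℂ) - (κ₁:ℂ) * Complex.I)) =
        ζ ^ 2 - 2 * (ρ:ℂ) * ζ + ((ρ:ℂ) ^ 2 + (κ₁:ℂ) ^ 2) := by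
      linear_combination (-(κ₁:ℂ) ^ 2) * Complex.I_sq
    have h2 : (ζ - (-(ρ:ℂ) + (κ₃:ℂ) * Complex.I)) * (ζ - (-(ρ:ℂ) - (κ₃:ℂ) * Complex.I)) =
        ζ ^ 2 + 2 * (ρ:ℂ) * ζ + ((ρ:ℂ) ^ 2 + (κ₃:ℂ) ^ 2) := by
      linear_combination (-(κ₃:ℂ) ^ 2) * Complex.I_sq
    have hfac : ζ ^ 4 + ζ ^ 2 + 2 * (r : ℂ) * ζ + 2 * (r : ℂ) ^ 2 =
        (ζ - ((ρ:ℂ) + (κ₁:ℂ) * Complex.I)) * (ζ - ((ρ:ℂ) - (κ₁:ℂ) * Complex.I)) *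
        ((ζ - (-(ρ:ℂ) + (κ₃:ℂ) * Complex.I)) * (ζ - (-(ρ:ℂ) - (κ₃:ℂ) * Complex.I))) := by
      rw [h1, h2]
      linear_combination (-(ζ ^ 2)) * hAc + (-ζ) * hBc + (-1 : ℂ) * hABc
    constructor
    · intro h
      rw [hfac] at h
      rcases mul_eq_zero.mp h with h | h
      · rcases mul_eq_zero.mp h with h | h
        · exact Or.inl (sub_eq_zero.mp h)
        · exact Or.inr (Or.inl (sub_eq_zero.mp h))
      · rcases mul_eq_zero.mp h with h | h
        · exact Or.inr (Or.inr (Or.inl (sub_eq_zero.mp h)))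
        · exact Or.inr (Or.inr (Or.inr (sub_eq_zero.mp h)))
    · intro h
      rw [hfac]
      rcases h with h | h | h | h <;> rw [h] <;> ring
  refine ⟨ρ, κ₁, κ₃, hρpos, hκ₁pos, hκ₃pos, hk1, hk3, hc, hiff, ?_⟩
  intro x hx
  have hx' : (x:ℂ) ^ 4 + (x:ℂ) ^ 2 + 2 * (r:ℂ) * (x:ℂ) + 2 * (r:ℂ) ^ 2 = 0 := by
    exact_mod_cast congrArg (Complex.ofReal) hx
  rcases (hiff x).mp hx' with h | h | h | h <;>
    · have him := congrArg Complex.im h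
      simp at him
      first
        | linarith [hκ₁pos, him]
        | linarith [hκ₃pos, him]
end

section
/- For r > 0, let ρ(r), κ₁(r), κ₃(r) > 0 be the root parameters of the quartic ζ⁴ + ζ² + 2rζ + 2r² (roots ρ ± iκ₁ and −ρ ± iκ₃), and define a(r) := ρ(1 + 4ρ²)(ρ² − r²) / (8ρ⁴(1 + 4ρ²) + r²), b(r) := κ₁^{−1}[ −1/4 + aρ − r/(4ρ) − a r/(4ρ²) ], d(r) := κ₃^{−1}[ −1/4 + aρ + r/(4ρ) + a r/(4ρ²) ]. Then there exist r* > 0 and C > 0 such that for all 0 < r < r*: |ρ(r) − r + 8r⁵| ≤ C r⁷, |κ₁(r) − 1 − r²/2| ≤ C r⁴, |κ₃(r) − r + 2r³| ≤ C r⁵, |a(r) + 16 r⁵| ≤ C r⁷, |b(r) + 1/2| ≤ C r², and |d(r) + 2r³| ≤ C r⁵. -/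
set_option maxHeartbeats 1000000
set_option linter.unusedVariables false

private lemma aux0 (r p : ℝ) (hr0 : 0 < r) (hr : r < 1/20) (hp : 0 < p)
    (e3 : 16*p^6 + 8*p^4 + p^2*(1-8*r^2) = r^2) : p < r := by
  by_contra h
  push_neg at h
  have h2 : r^2 ≤ p^2 := by nlinarith
  nlinarith [pow_pos hp 6, mul_le_mul_of_nonneg_left h2 (by positivity : (0:ℝ) ≤ 8*p^2)]

private lemma aux1 (r p : ℝ) (hr0 : 0 < r) (hr : r < 1/20) (hp : 0 < p) (hpr : p < r)
    (e3 : 16*p^6 + 8*p^4 + p^2*(1-8*r^2) = r^2) :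
    r^2 - p^2 ≤ 16*r^6 ∧ 16*r^6 - 200*r^8 ≤ r^2 - p^2 := by
  have hid : (r^2 - p^2)*(1+8*p^2) = 16*p^6 := by linarith [e3]
  have hp2 : p^2 ≤ r^2 := by nlinarith
  have hr2 : r^2 ≤ 1/400 := by nlinarith
  have h6 : p^6 ≤ r^6 := by nlinarith [pow_le_pow_left₀ hp.le hpr.le 6]
  have hub : r^2 - p^2 ≤ 16*r^6 := by
    nlinarith [mul_nonneg (sub_nonneg.2 hp2) (sq_nonneg p)]
  refine ⟨hub, ?_⟩
  have hlp2 : r^2 - 16*r^6 ≤ p^2 := by linarith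
  have hr6pos : (0:ℝ) ≤ r^2 - 16*r^6 := by
    nlinarith [pow_le_pow_left₀ hr0.le hr.le 4, sq_nonneg r]
  have hc : (r^2 - 16*r^6)^3 ≤ (p^2)^3 := pow_le_pow_left₀ hr6pos hlp2 3
  have step1 : 16*(r^2-16*r^6)^3 - 128*r^8 ≤ r^2 - p^2 := by
    nlinarith [hc, mul_le_mul hp2 hub (by linarith) (sq_nonneg r)]
  have h10 : r^10 ≤ r^8 * (1/400) := by
    nlinarith [mul_le_mul_of_nonneg_left hr2 (pow_nonneg hr0.le 8)]
  have h18 : r^18 ≤ r^14 * (1/160000) := by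
    nlinarith [mul_le_mul_of_nonneg_left (mul_le_mul hr2 hr2 (sq_nonneg r) (by norm_num)) (pow_nonneg hr0.le 14)]
  have h14 : (0:ℝ) ≤ r^14 := pow_nonneg hr0.le 14
  nlinarith [step1, h10, h18, h14]

private lemma aux2 (r p : ℝ) (hr0 : 0 < r) (hr : r < 1/20) (hp : 0 < p)
    (hub : r^2 - p^2 ≤ 16*r^6) (hlb : 16*r^6 - 200*r^8 ≤ r^2 - p^2) :
    r/2 ≤ p ∧ r - 8*r^5 - 400*r^7 ≤ p ∧ p ≤ r - 8*r^5 + 400*r^7 := by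
  have hr2 : r^2 ≤ 1/400 := by nlinarith
  have hr4 : r^4 ≤ 1/160000 := by nlinarith [pow_le_pow_left₀ hr0.le hr.le 4]
  have hph : r/2 ≤ p := by
    by_contra h
    push_neg at h
    nlinarith [mul_pos (show (0:ℝ) < r/2 - p by linarith) (show (0:ℝ) < r/2 + p by linarith),
      mul_le_mul_of_nonneg_left hr4 (sq_nonneg r)]
  have hs : r/2 ≤ r - 8*r^5 := by nlinarith [mul_le_mul_of_nonneg_left hr4 hr0.le]
  refine ⟨hph, ?_, ?_⟩
  · by_contra h
    push_neg at h
    have h1 : (r - 8*r^5 - 400*r^7) - p > 0 := by linarith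
    have h2 : (r - 8*r^5 - 400*r^7) + p > 0 := by nlinarith [mul_le_mul_of_nonneg_left hr4 (by positivity : (0:ℝ) ≤ 400*r^3), mul_le_mul_of_nonneg_left hr2 hr0.le]
    have h3 : (r - 8*r^5)^2 - p^2 ≤ 64*r^10 := by nlinarith
    nlinarith [mul_pos h1 h2, pow_nonneg hr0.le 8, mul_le_mul_of_nonneg_left hr2 (pow_nonneg hr0.le 8),
      mul_le_mul_of_nonneg_left hr4 (pow_nonneg hr0.le 8)]
  · by_contra h
    push_neg at h
    have h1 : p - (r - 8*r^5 + 400*r^7) > 0 := by linarith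
    have h2 : p + (r - 8*r^5 + 400*r^7) > 0 := by nlinarith [pow_nonneg hr0.le 7]
    have h3 : p^2 - (r - 8*r^5)^2 ≤ 200*r^8 := by nlinarith
    nlinarith [mul_pos h1 h2, pow_nonneg hr0.le 8, mul_le_mul_of_nonneg_left hr2 (pow_nonneg hr0.le 8)]

private lemma aux3 (r p k1 : ℝ) (hr0 : 0 < r) (hr : r < 1/20) (hp : 0 < p) (hk1 : 0 < k1)
    (hpr : p < r) (hph : r/2 ≤ p)
    (hub : r^2 - p^2 ≤ 16*r^6)
    (hplo : r - 8*r^5 - 400*r^7 ≤ p) (hphi : p ≤ r - 8*r^5 + 400*r^7)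
    (e1 : 2*k1^2 = 1 + 2*p^2 + r/p) :
    1 ≤ k1 ∧ k1 ≤ 1 + r^2 ∧ |k1 - 1 - r^2/2| ≤ 10*r^4 := by
  have hr2 : r^2 ≤ 1/400 := by
    have hx : r*r ≤ (1/20)*(1/20) := mul_le_mul hr.le hr.le hr0.le (by norm_num)
    linarith [hx]
  have hr7 : r^7 ≤ r^5*(1/400) := by linarith [mul_le_mul_of_nonneg_left hr2 (pow_nonneg hr0.le 5)]
  have hr3 : r^3 ≤ r*(1/400) := by linarith [mul_le_mul_of_nonneg_left hr2 hr0.le]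
  have hr5 : r^5 ≤ r^3*(1/400) := by linarith [mul_le_mul_of_nonneg_left hr2 (pow_nonneg hr0.le 3)]
  have e1' : 2*k1^2*p = p + 2*p^3 + r := by
    have h := e1
    field_simp at h
    linarith
  have hq1 : 7*r^5 ≤ r - p := by linarith [hr7, pow_nonneg hr0.le 5]
  have hq2 : r - p ≤ 9*r^5 := by linarith [hr7, pow_nonneg hr0.le 5]
  have hp2 : p^2 ≤ r^2 := by linarith [mul_le_mul hpr.le hpr.le hp.le hr0.le]
  have hw0 : 0 ≤ r^2 - p^2 := by linarith [mul_le_mul hpr.le hpr.le hp.le hr0.le]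
  have hk1lo : 1 ≤ k1 := by
    by_contra h
    push_neg at h
    have h3 : 0 < (1-k1)*(1+k1) := mul_pos (by linarith) (by linarith)
    have h4 : 0 < ((1-k1)*(1+k1))*p := mul_pos h3 hp
    linarith [h4, pow_pos hp 3, pow_pos hr0 5]
  have hk1hi : k1 ≤ 1 + r^2 := by
    by_contra h
    push_neg at h
    have h1 : (0:ℝ) < k1 - (1+r^2) := by linarith [sq_nonneg r]
    have h2 : (0:ℝ) < k1 + (1+r^2) := by linarith [sq_nonneg r]
    have hk2 : (1+r^2)^2 < k1^2 := by linarith [mul_pos h1 h2]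
    have hkk : 2*(1+r^2)^2*p < 2*k1^2*p := by
      have := mul_lt_mul_of_pos_right hk2 hp
      linarith
    have t1 : p*p^2 ≤ p*r^2 := mul_le_mul_of_nonneg_left hp2 hp.le
    have t2 : (r/2)*r^2 ≤ p*r^2 := mul_le_mul_of_nonneg_right hph (sq_nonneg r)
    have t4 : (0:ℝ) ≤ p*r^4 := by positivity
    linarith [t1, t2, t4, hr5, hq2, e1']
  refine ⟨hk1lo, hk1hi, ?_⟩
  rw [abs_le]
  have hEq : 2*p*(k1^2 - (1+r^2/2)^2) = (r - p) - 2*p*(r^2-p^2) - p*(r^4/2) := by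
    linear_combination e1'
  have hAu : 2*p*(k1^2 - (1+r^2/2)^2) ≤ 9*r^5 := by
    linarith [hEq, hq2, mul_nonneg hp.le hw0, mul_nonneg hp.le (pow_nonneg hr0.le 4)]
  have hAl : -(2*r^5) ≤ 2*p*(k1^2 - (1+r^2/2)^2) := by
    have h1 : p*(r^2-p^2) ≤ r*(16*r^6) := mul_le_mul hpr.le hub hw0 hr0.le
    have h2 : p*r^4 ≤ r*r^4 := mul_le_mul_of_nonneg_right hpr.le (pow_nonneg hr0.le 4)
    linarith [hEq, hq1, h1, h2, hr7]
  constructor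
  · by_contra h
    push_neg at h
    have h1 : 10*r^4 < (1 + r^2/2) - k1 := by linarith
    have h2 : (2:ℝ) ≤ (1 + r^2/2) + k1 := by linarith [sq_nonneg r]
    have h3 : 10*r^4*2 ≤ ((1 + r^2/2) - k1)*((1 + r^2/2) + k1) :=
      mul_le_mul h1.le h2 (by norm_num) (le_trans (by positivity) h1.le)
    have h4 : 20*r^4 ≤ (1+r^2/2)^2 - k1^2 := by linarith [h3]
    have h5 : r*(20*r^4) ≤ 2*p*((1+r^2/2)^2 - k1^2) := by
      have hx : (0:ℝ) ≤ (1+r^2/2)^2 - k1^2 := by linarith [pow_nonneg hr0.le 4]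
      linarith [mul_nonneg (show (0:ℝ) ≤ 2*p - r by linarith) hx,
        mul_le_mul_of_nonneg_left h4 hr0.le]
    linarith [pow_pos hr0 5, hAl, h5]
  · by_contra h
    push_neg at h
    have h1 : 10*r^4 < k1 - (1 + r^2/2) := by linarith
    have h2 : (2:ℝ) ≤ k1 + (1 + r^2/2) := by linarith [sq_nonneg r]
    have h3 : 10*r^4*2 ≤ (k1 - (1 + r^2/2))*(k1 + (1 + r^2/2)) :=
      mul_le_mul h1.le h2 (by norm_num) (le_trans (by positivity) h1.le)
    have h4 : 20*r^4 ≤ k1^2 - (1+r^2/2)^2 := by linarith [h3]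
    have h5 : r*(20*r^4) ≤ 2*p*(k1^2 - (1+r^2/2)^2) := by
      have hx : (0:ℝ) ≤ k1^2 - (1+r^2/2)^2 := by linarith [pow_nonneg hr0.le 4]
      linarith [mul_nonneg (show (0:ℝ) ≤ 2*p - r by linarith) hx,
        mul_le_mul_of_nonneg_left h4 hr0.le]
    linarith [pow_pos hr0 5, hAu, h5]

private lemma aux4 (r p k3 : ℝ) (hr0 : 0 < r) (hr : r < 1/20) (hp : 0 < p) (hk3 : 0 < k3)
    (hpr : p < r) (hph : r/2 ≤ p)
    (hub : r^2 - p^2 ≤ 16*r^6) (hlb : 16*r^6 - 200*r^8 ≤ r^2 - p^2)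
    (hplo : r - 8*r^5 - 400*r^7 ≤ p) (hphi : p ≤ r - 8*r^5 + 400*r^7)
    (e2 : 2*k3^2 = 1 + 2*p^2 - r/p) :
    |k3 - r + 2*r^3| ≤ 2000*r^5 ∧ r/2 ≤ k3 ∧ k3 ≤ 2*r := by
  have hr2 : r^2 ≤ 1/400 := by
    have hx : r*r ≤ (1/20)*(1/20) := mul_le_mul hr.le hr.le hr0.le (by norm_num)
    linarith [hx]
  have hr4 : r^4 ≤ 1/160000 := by
    have hx : r^2*r^2 ≤ (1/400)*(1/400) := mul_le_mul hr2 hr2 (sq_nonneg r) (by norm_num)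
    linarith [hx]
  have hr3 : r^3 ≤ r*(1/400) := by linarith [mul_le_mul_of_nonneg_left hr2 hr0.le]
  have hr5r : r^5 ≤ r*(1/160000) := by linarith [mul_le_mul_of_nonneg_left hr4 hr0.le]
  have hr9 : r^9 ≤ r^7*(1/400) := by linarith [mul_le_mul_of_nonneg_left hr2 (pow_nonneg hr0.le 7)]
  have hr11 : r^11 ≤ r^7*(1/160000) := by linarith [mul_le_mul_of_nonneg_left hr4 (pow_nonneg hr0.le 7)]
  have e2' : 2*k3^2*p = p + 2*p^3 - r := by
    have h := e2
    field_simp at h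
    linarith
  have hw0 : 0 ≤ r^2 - p^2 := by linarith [mul_le_mul hpr.le hpr.le hp.le hr0.le]
  have hEq : 2*p*(k3^2 - (r - 2*r^3)^2) = -(r-p) + 2*p*(p^2-r^2) + 8*p*r^4 - 8*p*r^6 := by
    linear_combination e2'
  have hAu : 2*p*(k3^2 - (r - 2*r^3)^2) ≤ 500*r^7 := by
    have h1 : 8*r^4*p ≤ 8*r^4*(r - 8*r^5 + 400*r^7) := mul_le_mul_of_nonneg_left hphi (by positivity)
    have h2 : (0:ℝ) ≤ p*(r^2 - p^2) := mul_nonneg hp.le hw0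
    have h4 : (0:ℝ) ≤ 8*p*r^6 := by positivity
    linarith [hEq, h1, h2, h4, hr11, pow_nonneg hr0.le 9]
  have hAl : -(500*r^7) ≤ 2*p*(k3^2 - (r - 2*r^3)^2) := by
    have h1 : 8*r^4*(r - 8*r^5 - 400*r^7) ≤ 8*r^4*p := mul_le_mul_of_nonneg_left hplo (by positivity)
    have h2 : p*(r^2-p^2) ≤ r*(16*r^6) := mul_le_mul hpr.le hub hw0 hr0.le
    have h4 : p*(8*r^6) ≤ r*(8*r^6) := mul_le_mul_of_nonneg_right hpr.le (by positivity)
    linarith [hEq, h1, h2, h4, hr9, hr11]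
  have hu2 : r/2 ≤ r - 2*r^3 := by linarith [hr3]
  have habs : |k3 - r + 2*r^3| ≤ 2000*r^5 := by
    rw [abs_le]
    constructor
    · by_contra h
      push_neg at h
      have h1 : 2000*r^5 < (r - 2*r^3) - k3 := by linarith
      have h2 : r/2 ≤ (r - 2*r^3) + k3 := by linarith
      have h3 : 2000*r^5*(r/2) ≤ ((r - 2*r^3) - k3)*((r - 2*r^3) + k3) :=
        mul_le_mul h1.le h2 (by linarith) (le_trans (by positivity) h1.le)
      have h4 : 1000*r^6 ≤ (r - 2*r^3)^2 - k3^2 := by linarith [h3]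
      have h5 : r*(1000*r^6) ≤ 2*p*((r - 2*r^3)^2 - k3^2) := by
        have hx : (0:ℝ) ≤ (r - 2*r^3)^2 - k3^2 := by linarith [pow_nonneg hr0.le 6]
        linarith [mul_nonneg (show (0:ℝ) ≤ 2*p - r by linarith) hx,
          mul_le_mul_of_nonneg_left h4 hr0.le]
      linarith [pow_pos hr0 7, hAl, h5]
    · by_contra h
      push_neg at h
      have h1 : 2000*r^5 < k3 - (r - 2*r^3) := by linarith
      have h2 : r/2 ≤ k3 + (r - 2*r^3) := by linarith
      have h3 : 2000*r^5*(r/2) ≤ (k3 - (r - 2*r^3))*(k3 + (r - 2*r^3)) :=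
        mul_le_mul h1.le h2 (by linarith) (le_trans (by positivity) h1.le)
      have h4 : 1000*r^6 ≤ k3^2 - (r - 2*r^3)^2 := by linarith [h3]
      have h5 : r*(1000*r^6) ≤ 2*p*(k3^2 - (r - 2*r^3)^2) := by
        have hx : (0:ℝ) ≤ k3^2 - (r - 2*r^3)^2 := by linarith [pow_nonneg hr0.le 6]
        linarith [mul_nonneg (show (0:ℝ) ≤ 2*p - r by linarith) hx,
          mul_le_mul_of_nonneg_left h4 hr0.le]
      linarith [pow_pos hr0 7, hAu, h5]
  rw [abs_le] at habs
  refine ⟨abs_le.2 habs, ?_, ?_⟩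
  · linarith [habs.1, hr3, hr5r]
  · linarith [habs.2, pow_nonneg hr0.le 3, hr5r]

private lemma aux5 (r p A : ℝ) (hr0 : 0 < r) (hr : r < 1/20) (hp : 0 < p)
    (hpr : p < r) (hph : r/2 ≤ p)
    (hub : r^2 - p^2 ≤ 16*r^6) (hlb : 16*r^6 - 200*r^8 ≤ r^2 - p^2)
    (hplo : r - 8*r^5 - 400*r^7 ≤ p) (hphi : p ≤ r - 8*r^5 + 400*r^7)
    (eA : A = p*(1+4*p^2)*(p^2-r^2) / (8*p^4*(1+4*p^2)+r^2)) :
    |A + 16*r^5| ≤ 1000*r^7 ∧ |A| ≤ 19*r^5 := by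
  have hr2 : r^2 ≤ 1/400 := by
    have hx : r*r ≤ (1/20)*(1/20) := mul_le_mul hr.le hr.le hr0.le (by norm_num)
    linarith [hx]
  have hr7 : r^7 ≤ r^5*(1/400) := by linarith [mul_le_mul_of_nonneg_left hr2 (pow_nonneg hr0.le 5)]
  have hq1 : 7*r^5 ≤ r - p := by linarith [hr7, pow_nonneg hr0.le 5]
  have hq2 : r - p ≤ 9*r^5 := by linarith [hr7, pow_nonneg hr0.le 5]
  have hw0 : 0 ≤ r^2 - p^2 := by linarith [mul_le_mul hpr.le hpr.le hp.le hr0.le]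
  have hD : (0:ℝ) < 8*p^4*(1+4*p^2)+r^2 := by positivity
  have hD2 : r^2 ≤ 8*p^4*(1+4*p^2)+r^2 := by
    linarith [mul_nonneg (pow_nonneg hp.le 4) (sq_nonneg p), pow_nonneg hp.le 4]
  have hkey : A + 16*r^5 =
      (p*(1+4*p^2)*(p^2-r^2) + 16*r^5*(8*p^4*(1+4*p^2)+r^2)) / (8*p^4*(1+4*p^2)+r^2) := by
    rw [eA]; field_simp
  have hp3 : p^3 ≤ r^3 := pow_le_pow_left₀ hp.le hpr.le 3
  have hp4 : p^4 ≤ r^4 := pow_le_pow_left₀ hp.le hpr.le 4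
  have hp6 : p^6 ≤ r^6 := pow_le_pow_left₀ hp.le hpr.le 6
  have c1a : (0:ℝ) ≤ r*(16*r^6 - (r^2-p^2)) := mul_nonneg hr0.le (by linarith)
  have c1b : r*(16*r^6 - (r^2-p^2)) ≤ 200*r^9 := by
    linarith [mul_le_mul_of_nonneg_left (show 16*r^6 - (r^2-p^2) ≤ 200*r^8 by linarith) hr0.le]
  have c2a : (0:ℝ) ≤ (r-p)*(r^2-p^2) := mul_nonneg (by linarith) hw0
  have c2b : (r-p)*(r^2-p^2) ≤ 144*r^11 := by
    linarith [mul_le_mul hq2 hub hw0 (by positivity : (0:ℝ) ≤ 9*r^5)]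
  have c3a : (0:ℝ) ≤ 4*p^3*(r^2-p^2) := by positivity
  have c3b : 4*p^3*(r^2-p^2) ≤ 64*r^9 := by
    linarith [mul_le_mul hp3 hub hw0 (by positivity : (0:ℝ) ≤ r^3)]
  have c4a : (0:ℝ) ≤ 128*r^5*p^4 := by positivity
  have c4b : 128*r^5*p^4 ≤ 128*r^9 := by linarith [mul_le_mul_of_nonneg_left hp4 (by positivity : (0:ℝ) ≤ 128*r^5)]
  have c5a : (0:ℝ) ≤ 512*r^5*p^6 := by positivity
  have c5b : 512*r^5*p^6 ≤ 512*r^11 := by linarith [mul_le_mul_of_nonneg_left hp6 (by positivity : (0:ℝ) ≤ 512*r^5)]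
  have c6 : r^11 ≤ r^9*(1/400) := by linarith [mul_le_mul_of_nonneg_left hr2 (pow_nonneg hr0.le 9)]
  have hEid : p*(1+4*p^2)*(p^2-r^2) + 16*r^5*(8*p^4*(1+4*p^2)+r^2) =
      r*(16*r^6 - (r^2-p^2)) + (r-p)*(r^2-p^2) - 4*p^3*(r^2-p^2) + 128*r^5*p^4 + 512*r^5*p^6 := by
    ring
  have hnum : |p*(1+4*p^2)*(p^2-r^2) + 16*r^5*(8*p^4*(1+4*p^2)+r^2)| ≤ 600*r^9 := by
    rw [abs_le]
    constructor <;> linarith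
  have hmain : |A + 16*r^5| ≤ 1000*r^7 := by
    rw [hkey, abs_div, abs_of_pos hD, div_le_iff₀ hD]
    have h2 : 1000*r^7*r^2 ≤ 1000*r^7*(8*p^4*(1+4*p^2)+r^2) :=
      mul_le_mul_of_nonneg_left hD2 (by positivity)
    linarith [h2, hnum, hr7, pow_nonneg hr0.le 9]
  refine ⟨hmain, ?_⟩
  have h1 : 1000*r^7 ≤ 3*r^5 := by linarith [hr7]
  rw [abs_le] at hmain ⊢
  constructor <;> [linarith [pow_nonneg hr0.le 5, hmain.1, h1]; linarith [pow_nonneg hr0.le 5, hmain.2, h1]]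

private lemma aux6 (r p k1 k3 A bb dd : ℝ) (hr0 : 0 < r) (hr : r < 1/20) (hp : 0 < p)
    (hpr : p < r) (hph : r/2 ≤ p)
    (hub : r^2 - p^2 ≤ 16*r^6) (hlb : 16*r^6 - 200*r^8 ≤ r^2 - p^2)
    (hplo : r - 8*r^5 - 400*r^7 ≤ p) (hphi : p ≤ r - 8*r^5 + 400*r^7)
    (hk1lo : 1 ≤ k1) (hk1hi : k1 ≤ 1 + r^2)
    (hk3lo : r/2 ≤ k3) (hk3hi : k3 ≤ 2*r) (hk3c : |k3 - r + 2*r^3| ≤ 2000*r^5)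
    (hA16 : |A + 16*r^5| ≤ 1000*r^7) (hA : |A| ≤ 19*r^5)
    (eB : bb = k1⁻¹ * (-(1/4) + A*p - r/(4*p) - A*r/(4*(p)^2)))
    (eD : dd = k3⁻¹ * (-(1/4) + A*p + r/(4*p) + A*r/(4*(p)^2))) :
    |bb + 1/2| ≤ 10*r^2 ∧ |dd + 2*r^3| ≤ 5000*r^5 := by
  have hr2 : r^2 ≤ 1/400 := by
    have hx : r*r ≤ (1/20)*(1/20) := mul_le_mul hr.le hr.le hr0.le (by norm_num)
    linarith [hx]
  have hk10 : (0:ℝ) < k1 := by linarith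
  have hk30 : (0:ℝ) < k3 := by linarith
  have hq1 : 8*r^5 - 400*r^7 ≤ r - p := by linarith
  have hq2 : r - p ≤ 8*r^5 + 400*r^7 := by linarith
  have hp3 : p^3 ≤ r^3 := pow_le_pow_left₀ hp.le hpr.le 3
  have hp30 : (0:ℝ) ≤ p^3 := by positivity
  have hAlo : -(19*r^5) ≤ A := (abs_le.1 hA).1
  have hAhi : A ≤ 19*r^5 := (abs_le.1 hA).2
  have hr7 : r^7 ≤ r^5*(1/400) := by linarith [mul_le_mul_of_nonneg_left hr2 (pow_nonneg hr0.le 5)]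
  have hr6 : r^6 ≤ r^4*(1/400) := by linarith [mul_le_mul_of_nonneg_left hr2 (pow_nonneg hr0.le 4)]
  have hr8 : r^8 ≤ r^6*(1/400) := by linarith [mul_le_mul_of_nonneg_left hr2 (pow_nonneg hr0.le 6)]
  have hr10 : r^10 ≤ r^8*(1/400) := by linarith [mul_le_mul_of_nonneg_left hr2 (pow_nonneg hr0.le 8)]
  -- bounds on products
  have mAp3a : A*p^3 ≤ 19*r^8 := by
    have h1 : A*p^3 ≤ 19*r^5*p^3 := by linarith [mul_le_mul_of_nonneg_right hAhi hp30]
    have h2 : 19*r^5*p^3 ≤ 19*r^5*r^3 := mul_le_mul_of_nonneg_left hp3 (by positivity)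
    linarith [h1, h2]
  have mAp3b : -(19*r^8) ≤ A*p^3 := by
    have h1 : -(19*r^5)*p^3 ≤ A*p^3 := mul_le_mul_of_nonneg_right hAlo hp30
    have h2 : 19*r^5*p^3 ≤ 19*r^5*r^3 := mul_le_mul_of_nonneg_left hp3 (by positivity)
    linarith [h1, h2]
  have mAra : A*r ≤ -16*r^6 + 1000*r^8 := by
    have h1 : (A + 16*r^5)*r ≤ (1000*r^7)*r := mul_le_mul_of_nonneg_right (abs_le.1 hA16).2 hr0.le
    linarith [h1]
  have mArb : -16*r^6 - 1000*r^8 ≤ A*r := by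
    have h1 : (-(1000*r^7))*r ≤ (A + 16*r^5)*r := mul_le_mul_of_nonneg_right (abs_le.1 hA16).1 hr0.le
    linarith [h1]
  have mpq_a : p*(r-p) ≤ 8*r^6 + 400*r^8 := by
    have h0 : (0:ℝ) ≤ r - p := by linarith
    have h1 : p*(r-p) ≤ r*(8*r^5 + 400*r^7) := mul_le_mul hpr.le hq2 h0 hr0.le
    linarith [h1]
  have mpq_b : 8*r^6 - 410*r^8 ≤ p*(r-p) := by
    have h1 : (0:ℝ) ≤ 8*r^5 - 400*r^7 := by linarith [hr7, pow_nonneg hr0.le 5]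
    have h2 : (r - 8*r^5 - 400*r^7)*(8*r^5 - 400*r^7) ≤ p*(r-p) :=
      mul_le_mul hplo hq1 h1 hp.le
    linarith [h2, pow_nonneg hr0.le 14, hr10]
  have hp2ub : p^2 ≤ r^2 := by
    have := mul_le_mul hpr.le hpr.le hp.le hr0.le
    linarith [this]
  have hp2lb : r^2 - 16*r^6 ≤ p^2 := by linarith
  have hr2p : r^2 ≤ 4*p^2 := by
    have := mul_le_mul hph hph (by positivity) hp.le
    linarith [this]
  -- part b
  have hMb : |(-(p^2) + 4*A*p^3 - r*p - A*r + 2*p^2*k1)| ≤ 5*r^4 := by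
    have m4a : 2*p^2*(k1-1) ≤ 2*r^4 := by
      have hx : p^2*(k1-1) ≤ r^2*r^2 := mul_le_mul hp2ub (by linarith) (by linarith) (sq_nonneg r)
      linarith [hx]
    have m4b : (0:ℝ) ≤ 2*p^2*(k1-1) := by
      linarith [mul_nonneg (sq_nonneg p) (show (0:ℝ) ≤ k1 - 1 by linarith)]
    have hdec : -(p^2) + 4*A*p^3 - r*p - A*r + 2*p^2*k1 =
        -(p*(r-p)) + 4*(A*p^3) - A*r + 2*p^2*(k1-1) := by ring
    rw [hdec, abs_le]
    constructor <;> linarith [mpq_a, mpq_b, mAp3a, mAp3b, mAra, mArb, hr6, hr8, pow_nonneg hr0.le 4]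
  have hBkey : bb + 1/2 = (-(p^2) + 4*A*p^3 - r*p - A*r + 2*p^2*k1) / (4*p^2*k1) := by
    rw [eB]; field_simp; ring
  have hb2 : |bb + 1/2| ≤ 10*r^2 := by
    rw [hBkey, abs_div, abs_of_pos (by positivity : (0:ℝ) < 4*p^2*k1), div_le_iff₀ (by positivity : (0:ℝ) < 4*p^2*k1)]
    have h1 : r^2 ≤ 4*p^2*k1 := by
      have := mul_le_mul hr2p hk1lo (by norm_num) (by positivity : (0:ℝ) ≤ 4*p^2)
      linarith
    have h2 : 10*r^2*r^2 ≤ 10*r^2*(4*p^2*k1) := mul_le_mul_of_nonneg_left h1 (by positivity)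
    linarith [hMb, h2, pow_nonneg hr0.le 4]
  refine ⟨hb2, ?_⟩
  -- part d
  have hDkey : dd + 2*r^3 = (-(p^2) + 4*A*p^3 + r*p + A*r + 8*r^3*p^2*k3) / (4*p^2*k3) := by
    rw [eD]; field_simp; ring
  have hk3r_a : k3 - r + 2*r^3 ≤ 2000*r^5 := (abs_le.1 hk3c).2
  have hk3r_b : -(2000*r^5) ≤ k3 - r + 2*r^3 := (abs_le.1 hk3c).1
  have hMd : |(-(p^2) + 4*A*p^3 + r*p + A*r + 8*r^3*p^2*k3)| ≤ 1600*r^8 := by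
    -- -(p²) + rp = p(r-p);  8r³p²k3 = 8r⁴p² + 8r³p²(k3-r)
    have m5a : 8*r^4*p^2 ≤ 8*r^6 := by linarith [mul_le_mul_of_nonneg_left hp2ub (by positivity : (0:ℝ) ≤ 8*r^4)]
    have m5b : 8*r^6 - 128*r^10 ≤ 8*r^4*p^2 := by linarith [mul_le_mul_of_nonneg_left hp2lb (by positivity : (0:ℝ) ≤ 8*r^4)]
    have m6 : |8*r^3*p^2*(k3-r)| ≤ 56*r^8 := by
      rw [abs_mul]
      have hr5 : r^5 ≤ r^3*(1/400) := by linarith [mul_le_mul_of_nonneg_left hr2 (pow_nonneg hr0.le 3)]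
      have h1 : |k3 - r| ≤ 7*r^3 := by
        rw [abs_le]
        constructor <;> linarith [hr5, pow_nonneg hr0.le 3]
      have h2 : |8*r^3*p^2| = 8*r^3*p^2 := abs_of_nonneg (by positivity)
      rw [h2]
      have h3 : 8*r^3*p^2 * |k3-r| ≤ (8*r^3*r^2) * (7*r^3) :=
        mul_le_mul (by linarith [mul_le_mul_of_nonneg_left hp2ub (by positivity : (0:ℝ) ≤ 8*r^3)]) h1 (abs_nonneg _) (by positivity)
      linarith [h3]
    have m6a := (abs_le.1 m6).2
    have m6b := (abs_le.1 m6).1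
    rw [abs_le]
    have hdec : -(p^2) + 4*A*p^3 + r*p + A*r + 8*r^3*p^2*k3 =
        p*(r-p) + 4*(A*p^3) + A*r + 8*r^4*p^2 + 8*r^3*p^2*(k3-r) := by ring
    rw [hdec]
    constructor <;> linarith [mpq_a, mpq_b, mAp3a, mAp3b, mAra, mArb, m5a, m5b, m6a, m6b, hr10, pow_nonneg hr0.le 8]
  rw [hDkey, abs_div, abs_of_pos (by positivity : (0:ℝ) < 4*p^2*k3), div_le_iff₀ (by positivity : (0:ℝ) < 4*p^2*k3)]
  have h1 : r^2*(r/2) ≤ (4*p^2)*k3 :=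
    mul_le_mul hr2p hk3lo (by positivity) (by positivity)
  have h2 : 5000*r^5*(r^2*(r/2)) ≤ 5000*r^5*((4*p^2)*k3) :=
    mul_le_mul_of_nonneg_left h1 (by positivity)
  linarith [hMd, h2, pow_nonneg hr0.le 8]


/-- Small-frequency asymptotics of the root parameters `ρ, κ₁, κ₃` of the quartic
`ζ⁴ + ζ² + 2rζ + 2r²` and of the partial fraction coefficients `a, b, d` for the
second generalized Poisson equilibrium: `ρ = r - 8r⁵ + O(r⁷)`, `κ₁ = 1 + r²/2 + O(r⁴)`,
`κ₃ = r - 2r³ + O(r⁵)`, `a = -16r⁵ + O(r⁷)`, `b = -1/2 + O(r²)`, `d = -2r³ + O(r⁵)`. -/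
theorem expansions_second_generalized_poisson (ρ κ₁ κ₃ a b d : ℝ → ℝ)
    (hpos : ∀ r : ℝ, 0 < r → 0 < ρ r ∧ 0 < κ₁ r ∧ 0 < κ₃ r)
    (hroots : ∀ r : ℝ, 0 < r → ∀ ζ : ℂ,
      ζ ^ 4 + ζ ^ 2 + 2 * (r : ℂ) * ζ + 2 * (r : ℂ) ^ 2 = 0 ↔
        ζ = (ρ r : ℂ) + (κ₁ r : ℂ) * Complex.I ∨ ζ = (ρ r : ℂ) - (κ₁ r : ℂ) * Complex.I ∨
          ζ = -(ρ r : ℂ) + (κ₃ r : ℂ) * Complex.I ∨ ζ = -(ρ r : ℂ) - (κ₃ r : ℂ) * Complex.I)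
    (heq1 : ∀ r : ℝ, 0 < r → 2 * (κ₁ r) ^ 2 = 1 + 2 * (ρ r) ^ 2 + r / ρ r)
    (heq2 : ∀ r : ℝ, 0 < r → 2 * (κ₃ r) ^ 2 = 1 + 2 * (ρ r) ^ 2 - r / ρ r)
    (heq3 : ∀ r : ℝ, 0 < r →
      16 * (ρ r) ^ 6 + 8 * (ρ r) ^ 4 + (ρ r) ^ 2 * (1 - 8 * r ^ 2) = r ^ 2)
    (ha : ∀ r : ℝ, 0 < r →
      a r = ρ r * (1 + 4 * (ρ r) ^ 2) * ((ρ r) ^ 2 - r ^ 2) /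
        (8 * (ρ r) ^ 4 * (1 + 4 * (ρ r) ^ 2) + r ^ 2))
    (hb : ∀ r : ℝ, 0 < r →
      b r = (κ₁ r)⁻¹ * (-(1/4) + a r * ρ r - r / (4 * ρ r) - a r * r / (4 * (ρ r) ^ 2)))
    (hd : ∀ r : ℝ, 0 < r →
      d r = (κ₃ r)⁻¹ * (-(1/4) + a r * ρ r + r / (4 * ρ r) + a r * r / (4 * (ρ r) ^ 2))) :
    ∃ rs : ℝ, 0 < rs ∧ ∃ C : ℝ, 0 < C ∧ ∀ r : ℝ, 0 < r → r < rs →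
      |ρ r - r + 8 * r ^ 5| ≤ C * r ^ 7 ∧
      |κ₁ r - 1 - r ^ 2 / 2| ≤ C * r ^ 4 ∧
      |κ₃ r - r + 2 * r ^ 3| ≤ C * r ^ 5 ∧
      |a r + 16 * r ^ 5| ≤ C * r ^ 7 ∧
      |b r + 1 / 2| ≤ C * r ^ 2 ∧
      |d r + 2 * r ^ 3| ≤ C * r ^ 5 := by
  refine ⟨1/20, by norm_num, 100000, by norm_num, ?_⟩
  intro r hr0 hr
  obtain ⟨hp, hk1, hk3⟩ := hpos r hr0
  have e3 := heq3 r hr0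
  have e1 := heq1 r hr0
  have e2 := heq2 r hr0
  have eA := ha r hr0
  have eB := hb r hr0
  have eD := hd r hr0
  set p := ρ r with hpdef
  set k1 := κ₁ r with hk1def
  set k3 := κ₃ r with hk3def
  set A := a r with hAdef
  have e3' : 16*p^6 + 8*p^4 + p^2*(1-8*r^2) = r^2 := by linarith [e3]
  have hpr : p < r := aux0 r p hr0 hr hp e3'
  obtain ⟨hub, hlb⟩ := aux1 r p hr0 hr hp hpr e3'
  obtain ⟨hph, hplo, hphi⟩ := aux2 r p hr0 hr hp hub hlb
  have e1' : 2*k1^2 = 1 + 2*p^2 + r/p := by linarith [e1]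
  have e2' : 2*k3^2 = 1 + 2*p^2 - r/p := by linarith [e2]
  obtain ⟨hk1lo, hk1hi, hgoal2⟩ := aux3 r p k1 hr0 hr hp hk1 hpr hph hub hplo hphi e1'
  obtain ⟨hgoal3, hk3lo, hk3hi⟩ := aux4 r p k3 hr0 hr hp hk3 hpr hph hub hlb hplo hphi e2'
  have eA' : A = p*(1+4*p^2)*(p^2-r^2) / (8*p^4*(1+4*p^2)+r^2) := by
    exact eA
  obtain ⟨hgoal4, hAabs⟩ := aux5 r p A hr0 hr hp hpr hph hub hlb hplo hphi eA'
  have eB' : b r = k1⁻¹ * (-(1/4) + A*p - r/(4*p) - A*r/(4*(p)^2)) := eB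
  have eD' : d r = k3⁻¹ * (-(1/4) + A*p + r/(4*p) + A*r/(4*(p)^2)) := eD
  obtain ⟨hgoal5, hgoal6⟩ := aux6 r p k1 k3 A (b r) (d r) hr0 hr hp hpr hph hub hlb
    hplo hphi hk1lo hk1hi hk3lo hk3hi hgoal3 hgoal4 hAabs eB' eD'
  have hr7 : (0:ℝ) ≤ r^7 := by positivity
  have hr5 : (0:ℝ) ≤ r^5 := by positivity
  have hr4 : (0:ℝ) ≤ r^4 := by positivity
  have hr2 : (0:ℝ) ≤ r^2 := by positivity
  have hgoal1 : |p - r + 8*r^5| ≤ 400*r^7 := by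
    rw [abs_le]; constructor <;> linarith
  refine ⟨by linarith [hgoal1], by linarith [hgoal2], by linarith [hgoal3],
    by linarith [hgoal4], by linarith [hgoal5], by linarith [hgoal6]⟩
end

section
/- Let κ > 0 and let N : [0, ∞) → ℂ be continuous. If ρ : [0, ∞) → ℂ is continuous and satisfies the Volterra equation ρ(t) + ∫₀^t (t − τ) e^{−κ(t−τ)} ρ(τ) dτ = N(t) for all t ≥ 0, then ρ(t) = N(t) − ∫₀^t e^{−κ(t−τ)} sin(t − τ) N(τ) dτ for all t ≥ 0. Conversely, the function defined by this formula solves the Volterra equation. -/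
open MeasureTheory intervalIntegral

lemma vr_aux1 (a : ℝ) : ∫ u in (0:ℝ)..a, (a - u) * Real.sin u = a - Real.sin a := by
  have h : ∀ u ∈ Set.uIcc (0:ℝ) a, HasDerivAt (fun u => -a * Real.cos u - Real.sin u + u * Real.cos u) ((a - u) * Real.sin u) u := by
    intro u _
    have h1 : HasDerivAt (fun u => -a * Real.cos u - Real.sin u + u * Real.cos u)
        (-a * (-Real.sin u) - Real.cos u + (1 * Real.cos u + u * (-Real.sin u))) u :=
      (((Real.hasDerivAt_cos u).const_mul (-a)).sub (Real.hasDerivAt_sin u)).add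
        ((hasDerivAt_id u).mul (Real.hasDerivAt_cos u))
    convert h1 using 1; ring
  rw [integral_eq_sub_of_hasDerivAt h (by apply Continuous.intervalIntegrable; continuity)]
  simp; ring

lemma vr_aux2 (a : ℝ) : ∫ u in (0:ℝ)..a, u * Real.sin (a - u) = a - Real.sin a := by
  have h : ∀ u ∈ Set.uIcc (0:ℝ) a, HasDerivAt (fun u => u * Real.cos (a - u) + Real.sin (a - u)) (u * Real.sin (a - u)) u := by
    intro u _
    have hc : HasDerivAt (fun u : ℝ => a - u) (-1) u := by
      exact (hasDerivAt_id u).const_sub a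
    have h1 : HasDerivAt (fun u => u * Real.cos (a - u) + Real.sin (a - u))
        (1 * Real.cos (a - u) + u * (-Real.sin (a - u) * -1) + Real.cos (a - u) * -1) u :=
      ((hasDerivAt_id u).mul ((Real.hasDerivAt_cos (a - u)).comp u hc)).add
        ((Real.hasDerivAt_sin (a - u)).comp u hc)
    convert h1 using 1; ring
  rw [integral_eq_sub_of_hasDerivAt h (by apply Continuous.intervalIntegrable; continuity)]
  simp

lemma vr_conv1 (κ τ t : ℝ) :
    ∫ s in τ..t, (t - s) * Real.exp (-(κ * (t - s))) * (Real.exp (-(κ * (s - τ))) * Real.sin (s - τ))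
      = Real.exp (-(κ * (t - τ))) * ((t - τ) - Real.sin (t - τ)) := by
  have h : ∀ s, (t - s) * Real.exp (-(κ * (t - s))) * (Real.exp (-(κ * (s - τ))) * Real.sin (s - τ))
      = Real.exp (-(κ * (t - τ))) * (((t - τ) - (s - τ)) * Real.sin (s - τ)) := by
    intro s
    rw [show (t - s) * Real.exp (-(κ * (t - s))) * (Real.exp (-(κ * (s - τ))) * Real.sin (s - τ))
        = Real.exp (-(κ * (t - s))) * Real.exp (-(κ * (s - τ))) * ((t - s) * Real.sin (s - τ)) by ring,
      ← Real.exp_add]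
    have : -(κ * (t - s)) + -(κ * (s - τ)) = -(κ * (t - τ)) := by ring
    rw [this]
    ring_nf
  simp_rw [h]
  rw [intervalIntegral.integral_const_mul]
  congr 1
  have := intervalIntegral.integral_comp_sub_right (a := τ) (b := t)
    (fun u => ((t - τ) - u) * Real.sin u) τ
  rw [sub_self] at this; exact this.trans (vr_aux1 (t - τ))

lemma vr_conv2 (κ τ t : ℝ) :
    ∫ s in τ..t, Real.exp (-(κ * (t - s))) * Real.sin (t - s) * ((s - τ) * Real.exp (-(κ * (s - τ))))
      = Real.exp (-(κ * (t - τ))) * ((t - τ) - Real.sin (t - τ)) := by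
  have h : ∀ s, Real.exp (-(κ * (t - s))) * Real.sin (t - s) * ((s - τ) * Real.exp (-(κ * (s - τ))))
      = Real.exp (-(κ * (t - τ))) * ((s - τ) * Real.sin ((t - τ) - (s - τ))) := by
    intro s
    rw [show Real.exp (-(κ * (t - s))) * Real.sin (t - s) * ((s - τ) * Real.exp (-(κ * (s - τ))))
        = Real.exp (-(κ * (t - s))) * Real.exp (-(κ * (s - τ))) * ((s - τ) * Real.sin (t - s)) by ring,
      ← Real.exp_add]
    have h1 : -(κ * (t - s)) + -(κ * (s - τ)) = -(κ * (t - τ)) := by ring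
    have h2 : (t - τ) - (s - τ) = t - s := by ring
    rw [h1, h2]
  simp_rw [h]
  rw [intervalIntegral.integral_const_mul]
  congr 1
  have := intervalIntegral.integral_comp_sub_right (a := τ) (b := t)
    (fun u => u * Real.sin ((t - τ) - u)) τ
  rw [sub_self] at this; exact this.trans (vr_aux2 (t - τ))

lemma triangle_swap {t : ℝ} (ht : 0 ≤ t) (F : ℝ → ℝ → ℂ)
    (hF : ContinuousOn (fun p : ℝ × ℝ => F p.1 p.2) (Set.Icc 0 t ×ˢ Set.Icc 0 t)) :
    ∫ s in (0:ℝ)..t, ∫ τ in (0:ℝ)..s, F s τ = ∫ τ in (0:ℝ)..t, ∫ s in τ..t, F s τ := by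
  set μ := volume.restrict (Set.Ioc (0:ℝ) t) with hμ
  set G : ℝ × ℝ → ℂ := {p : ℝ × ℝ | p.2 ≤ p.1}.indicator (fun p => F p.1 p.2) with hG
  have hsub : Set.Ioc (0:ℝ) t ×ˢ Set.Ioc (0:ℝ) t ⊆ Set.Icc (0:ℝ) t ×ˢ Set.Icc (0:ℝ) t :=
    Set.prod_mono Set.Ioc_subset_Icc_self Set.Ioc_subset_Icc_self
  have hGint : Integrable G (μ.prod μ) := by
    rw [hμ, Measure.prod_restrict]
    refine Integrable.indicator ?_ (isClosed_le continuous_snd continuous_fst).measurableSet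
    exact (hF.integrableOn_compact (isCompact_Icc.prod isCompact_Icc)).mono_set hsub
  have key : ∫ s, (∫ τ, G (s, τ) ∂μ) ∂μ = ∫ τ, (∫ s, G (s, τ) ∂μ) ∂μ := by
    have := MeasureTheory.integral_integral_swap (f := fun s τ => G (s, τ)) (μ := μ) (ν := μ) ?_
    · exact this
    · exact hGint
  have left : ∫ s in (0:ℝ)..t, ∫ τ in (0:ℝ)..s, F s τ = ∫ s, (∫ τ, G (s, τ) ∂μ) ∂μ := by
    rw [intervalIntegral.integral_of_le ht]
    refine setIntegral_congr_fun measurableSet_Ioc fun s hs => ?_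
    rw [intervalIntegral.integral_of_le hs.1.le]
    have hind : ∀ τ, G (s, τ) = (Set.Iic s).indicator (fun τ => F s τ) τ := by
      intro τ; simp [hG, Set.indicator_apply, Set.Iic]
    simp_rw [hind]
    rw [MeasureTheory.integral_indicator measurableSet_Iic, hμ, Measure.restrict_restrict measurableSet_Iic]
    have : Set.Iic s ∩ Set.Ioc 0 t = Set.Ioc 0 s := by
      ext x
      simp only [Set.mem_inter_iff, Set.mem_Iic, Set.mem_Ioc]
      exact ⟨fun ⟨h1, h2, h3⟩ => ⟨h2, h1⟩, fun ⟨h1, h2⟩ => ⟨h2, h1, h2.trans hs.2⟩⟩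
    rw [this]
  have right : ∫ τ in (0:ℝ)..t, ∫ s in τ..t, F s τ = ∫ τ, (∫ s, G (s, τ) ∂μ) ∂μ := by
    rw [intervalIntegral.integral_of_le ht]
    refine setIntegral_congr_fun measurableSet_Ioc fun τ hτ => ?_
    rw [intervalIntegral.integral_of_le hτ.2]
    have hind : ∀ s, G (s, τ) = (Set.Ici τ).indicator (fun s => F s τ) s := by
      intro s; simp [hG, Set.indicator_apply, Set.Ici]
    simp_rw [hind]
    rw [MeasureTheory.integral_indicator measurableSet_Ici, hμ, Measure.restrict_restrict measurableSet_Ici]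
    have : Set.Ici τ ∩ Set.Ioc 0 t = Set.Icc τ t := by
      ext x
      simp only [Set.mem_inter_iff, Set.mem_Ici, Set.mem_Ioc, Set.mem_Icc]
      exact ⟨fun ⟨h1, _, h3⟩ => ⟨h1, h3⟩, fun ⟨h1, h2⟩ => ⟨h1, hτ.1.trans_le h1, h2⟩⟩
    rw [this, MeasureTheory.integral_Icc_eq_integral_Ioc]
  rw [left, right, key]

lemma vr_assoc {t : ℝ} (ht : 0 ≤ t) (A B : ℝ → ℝ) (hA : Continuous A) (hB : Continuous B)
    (f : ℝ → ℂ) (hf : ContinuousOn f (Set.Ici 0)) :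
    ∫ s in (0:ℝ)..t, ((A (t - s) : ℝ) : ℂ) * (∫ τ in (0:ℝ)..s, ((B (s - τ) : ℝ) : ℂ) * f τ)
      = ∫ τ in (0:ℝ)..t, (((∫ s in τ..t, A (t - s) * B (s - τ)) : ℝ) : ℂ) * f τ := by
  have step1 : ∀ s : ℝ, ((A (t - s) : ℝ) : ℂ) * (∫ τ in (0:ℝ)..s, ((B (s - τ) : ℝ) : ℂ) * f τ)
      = ∫ τ in (0:ℝ)..s, ((A (t - s) : ℝ) : ℂ) * (((B (s - τ) : ℝ) : ℂ) * f τ) := fun s =>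
    (intervalIntegral.integral_const_mul _ _).symm
  simp_rw [step1]
  rw [triangle_swap ht (fun s τ => ((A (t - s) : ℝ) : ℂ) * (((B (s - τ) : ℝ) : ℂ) * f τ)) ?_]
  · have step2 : ∀ τ : ℝ, (∫ s in τ..t, ((A (t - s) : ℝ) : ℂ) * (((B (s - τ) : ℝ) : ℂ) * f τ))
        = (((∫ s in τ..t, A (t - s) * B (s - τ)) : ℝ) : ℂ) * f τ := by
      intro τ
      calc (∫ s in τ..t, ((A (t - s) : ℝ) : ℂ) * (((B (s - τ) : ℝ) : ℂ) * f τ))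
          = ∫ s in τ..t, (((A (t - s) * B (s - τ) : ℝ)) : ℂ) * f τ := by
            apply intervalIntegral.integral_congr; intro s _; push_cast; ring
        _ = (∫ s in τ..t, (((A (t - s) * B (s - τ) : ℝ)) : ℂ)) * f τ :=
            intervalIntegral.integral_mul_const _ _
        _ = _ := by rw [intervalIntegral.integral_ofReal]
    simp_rw [step2]
  · apply ContinuousOn.mul
    · exact (Complex.continuous_ofReal.comp (hA.comp (continuous_const.sub continuous_fst))).continuousOn
    · apply ContinuousOn.mul
      · exact (Complex.continuous_ofReal.comp (hB.comp (continuous_fst.sub continuous_snd))).continuousOn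
      · exact hf.comp continuous_snd.continuousOn (fun p hp => hp.2.1)

/-- Explicit resolvent formula for the Volterra equation with kernel
`(t-τ) e^{-κ(t-τ)}`, arising from the linearized Vlasov–Poisson system around
the Poisson equilibrium at a fixed spatial frequency of size `κ`. -/
theorem volterra_resolvent_poisson (κ : ℝ) (hκ : 0 < κ) (N ρ : ℝ → ℂ)
    (hN : ContinuousOn N (Set.Ici 0)) (hρ : ContinuousOn ρ (Set.Ici 0)) :
    ((∀ t : ℝ, 0 ≤ t →
        ρ t + (∫ τ in (0:ℝ)..t, (((t - τ) * Real.exp (-(κ * (t - τ))) : ℝ) : ℂ) * ρ τ) = N t) →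
      ∀ t : ℝ, 0 ≤ t →
        ρ t = N t - ∫ τ in (0:ℝ)..t,
          ((Real.exp (-(κ * (t - τ))) * Real.sin (t - τ) : ℝ) : ℂ) * N τ) ∧
    ((∀ t : ℝ, 0 ≤ t →
        ρ t = N t - ∫ τ in (0:ℝ)..t,
          ((Real.exp (-(κ * (t - τ))) * Real.sin (t - τ) : ℝ) : ℂ) * N τ) →
      ∀ t : ℝ, 0 ≤ t →
        ρ t + (∫ τ in (0:ℝ)..t, (((t - τ) * Real.exp (-(κ * (t - τ))) : ℝ) : ℂ) * ρ τ) = N t) := by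
  have hKA : Continuous (fun x : ℝ => x * Real.exp (-(κ * x))) := by continuity
  have hRB : Continuous (fun x : ℝ => Real.exp (-(κ * x)) * Real.sin x) := by continuity
  -- interval integrability of kernel * continuous function
  have hint : ∀ (c : ℝ → ℝ), Continuous c → ∀ (g : ℝ → ℂ), ContinuousOn g (Set.Ici 0) →
      ∀ t : ℝ, 0 ≤ t →
      IntervalIntegrable (fun τ => ((c (t - τ) : ℝ) : ℂ) * g τ) volume 0 t := by
    intro c hc g hg t ht
    apply ContinuousOn.intervalIntegrable
    apply ContinuousOn.mul
    · exact (Complex.continuous_ofReal.comp (hc.comp (continuous_const.sub continuous_id))).continuousOn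
    · exact hg.mono (by rw [Set.uIcc_of_le ht]; exact fun x hx => hx.1)
  constructor
  · -- direction 1
    intro hyp t ht
    have hassoc := vr_assoc ht (fun x => Real.exp (-(κ * x)) * Real.sin x)
      (fun x => x * Real.exp (-(κ * x))) hRB hKA ρ hρ
    -- LHS of hassoc equals ∫ R(t-s)*(N s - ρ s)
    have hL : (∫ s in (0:ℝ)..t, ((Real.exp (-(κ * (t - s))) * Real.sin (t - s) : ℝ) : ℂ)
          * (∫ τ in (0:ℝ)..s, (((s - τ) * Real.exp (-(κ * (s - τ))) : ℝ) : ℂ) * ρ τ))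
        = (∫ s in (0:ℝ)..t, ((Real.exp (-(κ * (t - s))) * Real.sin (t - s) : ℝ) : ℂ) * N s)
          - (∫ s in (0:ℝ)..t, ((Real.exp (-(κ * (t - s))) * Real.sin (t - s) : ℝ) : ℂ) * ρ s) := by
      rw [← intervalIntegral.integral_sub (hint _ hRB N hN t ht) (hint _ hRB ρ hρ t ht)]
      apply intervalIntegral.integral_congr
      intro s hs
      beta_reduce
      rw [Set.uIcc_of_le ht] at hs
      have h1 := hyp s hs.1
      have h2 : (∫ τ in (0:ℝ)..s, (((s - τ) * Real.exp (-(κ * (s - τ))) : ℝ) : ℂ) * ρ τ)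
          = N s - ρ s := eq_sub_of_add_eq' h1
      rw [h2]; ring
    -- RHS of hassoc equals ∫ (K - R)(t-τ) ρ τ
    have hR : (∫ τ in (0:ℝ)..t,
          (((∫ s in τ..t, Real.exp (-(κ * (t - s))) * Real.sin (t - s)
              * ((s - τ) * Real.exp (-(κ * (s - τ))))) : ℝ) : ℂ) * ρ τ)
        = (∫ τ in (0:ℝ)..t, (((t - τ) * Real.exp (-(κ * (t - τ))) : ℝ) : ℂ) * ρ τ)
          - (∫ τ in (0:ℝ)..t, ((Real.exp (-(κ * (t - τ))) * Real.sin (t - τ) : ℝ) : ℂ) * ρ τ) := by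
      rw [← intervalIntegral.integral_sub (hint _ hKA ρ hρ t ht) (hint _ hRB ρ hρ t ht)]
      apply intervalIntegral.integral_congr
      intro τ _
      beta_reduce
      rw [vr_conv2 κ τ t]
      push_cast
      ring
    rw [hL, hR] at hassoc
    have key : (∫ s in (0:ℝ)..t, ((Real.exp (-(κ * (t - s))) * Real.sin (t - s) : ℝ) : ℂ) * N s)
        = ∫ τ in (0:ℝ)..t, (((t - τ) * Real.exp (-(κ * (t - τ))) : ℝ) : ℂ) * ρ τ := by
      linear_combination hassoc
    rw [key]
    linear_combination hyp t ht
  · -- direction 2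
    intro hyp t ht
    have hassoc := vr_assoc ht (fun x => x * Real.exp (-(κ * x)))
      (fun x => Real.exp (-(κ * x)) * Real.sin x) hKA hRB N hN
    have hL : (∫ s in (0:ℝ)..t, (((t - s) * Real.exp (-(κ * (t - s))) : ℝ) : ℂ)
          * (∫ τ in (0:ℝ)..s, ((Real.exp (-(κ * (s - τ))) * Real.sin (s - τ) : ℝ) : ℂ) * N τ))
        = (∫ s in (0:ℝ)..t, (((t - s) * Real.exp (-(κ * (t - s))) : ℝ) : ℂ) * N s)
          - (∫ s in (0:ℝ)..t, (((t - s) * Real.exp (-(κ * (t - s))) : ℝ) : ℂ) * ρ s) := by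
      rw [← intervalIntegral.integral_sub (hint _ hKA N hN t ht) (hint _ hKA ρ hρ t ht)]
      apply intervalIntegral.integral_congr
      intro s hs
      beta_reduce
      rw [Set.uIcc_of_le ht] at hs
      have h1 := hyp s hs.1
      have h2 : (∫ τ in (0:ℝ)..s, ((Real.exp (-(κ * (s - τ))) * Real.sin (s - τ) : ℝ) : ℂ) * N τ)
          = N s - ρ s := by linear_combination h1
      rw [h2]; ring
    have hR : (∫ τ in (0:ℝ)..t,
          (((∫ s in τ..t, (t - s) * Real.exp (-(κ * (t - s)))
              * (Real.exp (-(κ * (s - τ))) * Real.sin (s - τ))) : ℝ) : ℂ) * N τ)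
        = (∫ τ in (0:ℝ)..t, (((t - τ) * Real.exp (-(κ * (t - τ))) : ℝ) : ℂ) * N τ)
          - (∫ τ in (0:ℝ)..t, ((Real.exp (-(κ * (t - τ))) * Real.sin (t - τ) : ℝ) : ℂ) * N τ) := by
      rw [← intervalIntegral.integral_sub (hint _ hKA N hN t ht) (hint _ hRB N hN t ht)]
      apply intervalIntegral.integral_congr
      intro τ _
      beta_reduce
      rw [vr_conv1 κ τ t]
      push_cast
      ring
    rw [hL, hR] at hassoc
    have key : (∫ τ in (0:ℝ)..t, (((t - τ) * Real.exp (-(κ * (t - τ))) : ℝ) : ℂ) * ρ τ)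
        = ∫ τ in (0:ℝ)..t, ((Real.exp (-(κ * (t - τ))) * Real.sin (t - τ) : ℝ) : ℂ) * N τ := by
      linear_combination -hassoc
    rw [hyp t ht, key]
    ring
end
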